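/- arXiv:0907.0232 — 5 statements merged into one kernel-verified Lean document; each statement's English description precedes it below -/
import Mathlib

section
/- Let n ≥ 2 be an integer and let 0 < λ < 1. Set v̄_λ(r) = λ(n−1)/(4(−log r)) for 0 < r < 1. Let r₁ ∈ (0,1) and t₁ > 0, and let v : (0, r₁] × [0, t₁] → ℝ be a smooth nonnegative function satisfying the differential inequality ∂_t v(r,t) ≥ F[v(·,t)](r) for all 0 < r ≤ r₁ and 0 < t ≤ t₁, and the initial inequality v(r,0) ≥ v_init(r), where v_init : (0, r₁] → [0,∞) satisfies v_init(r)/v₀(r) → 1 as r → 0⁺. Then there exist r₀ ∈ (0, r₁] and t₀ ∈ (0, t₁] such that v(r,t) ≥ v̄_λ(r) for all (r,t) ∈ (0, r₀] × [0, t₀]. -/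
open Real Set Filter
open Topology

/-- The quasilinear operator `F[v](r) = v v'' - (1/2)(v')² + ((n-1-v)/r) v' + (2(n-1)/r²) v (1-v)`. -/
noncomputable def Fop (n : ℕ) (v : ℝ → ℝ) (r : ℝ) : ℝ :=
  v r * deriv (deriv v) r - (1/2) * (deriv v r)^2
    + (((n : ℝ) - 1 - v r) / r) * deriv v r
    + (2 * ((n : ℝ) - 1) / r^2) * v r * (1 - v r)

lemma hasDerivAt_w (c : ℝ) {r : ℝ} (h0 : 0 < r) (h1 : r < 1) :
    HasDerivAt (fun x => c / (-Real.log x)) (c / (r * (Real.log r)^2)) r := by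
  have hl : Real.log r < 0 := Real.log_neg h0 h1
  have hd : HasDerivAt (fun x => -Real.log x) (-r⁻¹) r :=
    (Real.hasDerivAt_log h0.ne').neg
  have h := (hasDerivAt_const r c).fun_div hd (by simpa using hl.ne)
  refine h.congr_deriv ?_
  have := hl.ne
  field_simp
  ring

lemma hasDerivAt_w1 (c : ℝ) {r : ℝ} (h0 : 0 < r) (h1 : r < 1) :
    HasDerivAt (fun x => c / (x * (Real.log x)^2))
      (-(c * ((Real.log r)^2 + 2 * Real.log r)) / (r * (Real.log r)^2)^2) r := by
  have hl : Real.log r < 0 := Real.log_neg h0 h1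
  have hpow : HasDerivAt (fun x => (Real.log x)^2) (2 * (Real.log r)^1 * r⁻¹) r :=
    (Real.hasDerivAt_log h0.ne').pow 2
  have hg : HasDerivAt (fun x => x * (Real.log x)^2)
      (1 * (Real.log r)^2 + r * (2 * (Real.log r)^1 * r⁻¹)) r :=
    (hasDerivAt_id r).mul hpow
  have hne : r * (Real.log r)^2 ≠ 0 := mul_ne_zero h0.ne' (pow_ne_zero 2 hl.ne)
  have h := (hasDerivAt_const r c).fun_div hg hne
  refine h.congr_deriv ?_
  have := hl.ne
  field_simp
  ring

lemma Iio_diff_singleton (x : ℝ) : Iio x \ {x} = Iio x :=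
  Set.diff_singleton_eq_self (by simp)

/-- If `f` has derivative `d` at `x` and `f x ≤ f t` for `t` slightly to the left, `d ≤ 0`. -/
lemma deriv_nonpos_left {f : ℝ → ℝ} {x d : ℝ} (hx : HasDerivAt f d x)
    (h : ∀ᶠ t in 𝓝[<] x, f x ≤ f t) : d ≤ 0 := by
  have hw : HasDerivWithinAt f d (Iio x) x := hx.hasDerivWithinAt
  rw [hasDerivWithinAt_iff_tendsto_slope, Iio_diff_singleton] at hw
  refine le_of_tendsto hw ?_
  filter_upwards [h, self_mem_nhdsWithin] with t ht ht'
  have h1 : t - x < 0 := sub_neg.2 ht'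
  have h2 : 0 ≤ f t - f x := sub_nonneg.2 ht
  rw [slope_def_field, div_nonpos_iff]
  exact Or.inl ⟨h2, h1.le⟩

/-- Second derivative test at a local minimum. -/
lemma secondDeriv_nonneg_of_isLocalMin {f : ℝ → ℝ} {x : ℝ} {u : Set ℝ}
    (hu : IsOpen u) (hx : x ∈ u) (hf : ContDiffOn ℝ 2 f u) (hmin : IsLocalMin f x) :
    0 ≤ deriv (deriv f) x := by
  by_contra hneg
  push_neg at hneg
  have hg : ContDiffOn ℝ 1 (deriv f) u := hf.deriv_of_isOpen hu (by norm_num)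
  have hgd : DifferentiableAt ℝ (deriv f) x :=
    ((hg x hx).differentiableWithinAt (by norm_num)).differentiableAt (hu.mem_nhds hx)
  have hgx : deriv f x = 0 := hmin.deriv_eq_zero
  have hd : HasDerivAt (deriv f) (deriv (deriv f) x) x := hgd.hasDerivAt
  have hslope : Tendsto (slope (deriv f) x) (𝓝[<] x) (𝓝 (deriv (deriv f) x)) := by
    have h' := hd.hasDerivWithinAt (s := Iio x)
    rwa [hasDerivWithinAt_iff_tendsto_slope, Iio_diff_singleton] at h'
  have hev : ∀ᶠ t in 𝓝[<] x, slope (deriv f) x t < 0 :=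
    hslope.eventually_lt_const hneg
  have hpos : ∀ᶠ t in 𝓝[<] x, 0 < deriv f t := by
    filter_upwards [hev, self_mem_nhdsWithin] with t ht ht'
    rw [slope_def_field, hgx, sub_zero] at ht
    have h1 : t - x < 0 := sub_neg.2 ht'
    rcases div_neg_iff.1 ht with ⟨h,_⟩|⟨_,h⟩
    · exact h
    · linarith
  obtain ⟨l, hl, hIoo⟩ := mem_nhdsLT_iff_exists_Ioo_subset.1 hpos
  obtain ⟨ε, hε, hball⟩ := Metric.isOpen_iff.1 hu x hx
  set l2 := max l (x - ε/2) with hl2def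
  have hl2 : l2 < x := max_lt hl (by linarith)
  have hsub : Ioc l2 x ⊆ u := by
    intro t ht
    apply hball
    rw [Metric.mem_ball, Real.dist_eq, abs_lt]
    constructor
    · have : x - ε/2 ≤ l2 := le_max_right _ _
      linarith [ht.1]
    · linarith [ht.2, hε]
  have hmono : StrictMonoOn f (Ioc l2 x) := by
    apply strictMonoOn_of_deriv_pos (convex_Ioc l2 x) (hf.continuousOn.mono hsub)
    intro t ht
    rw [interior_Ioc] at ht
    exact hIoo ⟨lt_of_le_of_lt (le_max_left _ _) ht.1, ht.2⟩
  have hfreq : ∃ t, (f x ≤ f t) ∧ t ∈ Ioo l2 x := by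
    have h1 : ∀ᶠ t in 𝓝[<] x, f x ≤ f t := (hmin.filter_mono nhdsWithin_le_nhds)
    have h2 : Ioo l2 x ∈ 𝓝[<] x := mem_nhdsLT_iff_exists_Ioo_subset.2 ⟨l2, hl2, subset_rfl⟩
    exact (h1.and h2).exists
  obtain ⟨t, htf, htm⟩ := hfreq
  have : f t < f x := hmono ⟨htm.1, htm.2.le⟩ ⟨hl2, le_rfl⟩ htm.2
  linarith

lemma key_ineq (b c r L a W : ℝ) (hb : 1 ≤ b) (hc : 0 < c) (hcb : 4*c < b)
    (hr : 0 < r) (hL : 1 + 2*c ≤ L) (ha : 0 < a) (haL : a * L ≤ c)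
    (hW : c*(2 - L)/(r^2*L^3) ≤ W) :
    0 ≤ (c/L - a) * W - (1/2)*(c/(r*L^2))^2 + ((b - (c/L - a))/r) * (c/(r*L^2))
      + (2*b/r^2) * (c/L - a) * (1 - (c/L - a)) := by
  have hL0 : 0 < L := by linarith
  have hL1 : 1 ≤ L := by linarith
  have hV0 : 0 ≤ c/L - a := by
    rw [sub_nonneg, le_div_iff₀ hL0]
    linarith
  have hstep : (c/L - a) * (c*(2 - L)/(r^2*L^3)) ≤ (c/L - a) * W :=
    mul_le_mul_of_nonneg_left hW hV0
  have h1 : 0 ≤ c - a*L := by linarith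
  have hP : 0 ≤ c*(c - a*L)*(2 - L) - c^2/2 + c*b*L^2 + c*(a*L)*L - c^2*L
      + 2*b*L^2*(c - a*L)*(L - c + a*L) := by
    have h2 : (0:ℝ) < L - c + a*L := by nlinarith
    have h3 : 0 ≤ 2*b*L^2*(c - a*L)*(L - c + a*L) :=
      mul_nonneg (mul_nonneg (by positivity) h1) h2.le
    have h4 : -(c^2*L) ≤ c*(c - a*L)*(2 - L) := by
      nlinarith [mul_nonneg hc.le (mul_nonneg ha.le (sq_nonneg L)), mul_nonneg hc.le h1]
    have h5 : 4*c^2*L^2 ≤ c*b*L^2 := by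
      nlinarith [mul_nonneg (mul_nonneg (by linarith : (0:ℝ) ≤ b - 4*c) hc.le) (sq_nonneg L)]
    have h6 : 2*c^2*L + 2*c^2 ≤ 4*c^2*L^2 := by nlinarith [sq_nonneg (L-1), mul_pos hc hc]
    have h7 : 0 ≤ c*(a*L)*L := by positivity
    nlinarith [mul_pos hc hc]
  have hE : (c/L - a) * (c*(2 - L)/(r^2*L^3)) - (1/2)*(c/(r*L^2))^2
      + ((b - (c/L - a))/r) * (c/(r*L^2)) + (2*b/r^2) * (c/L - a) * (1 - (c/L - a))
      = (c*(c - a*L)*(2 - L) - c^2/2 + c*b*L^2 + c*(a*L)*L - c^2*L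
      + 2*b*L^2*(c - a*L)*(L - c + a*L)) / (r^2*L^4) := by
    field_simp
    ring
  have hfin := div_nonneg hP (by positivity : (0:ℝ) ≤ r^2*L^4)
  rw [← hE] at hfin
  linarith

set_option maxHeartbeats 2000000 in
/-- Lower barrier: any nonnegative smooth supersolution of `v_t = F[v]` on `(0,r₁]×[0,t₁]`
whose initial data dominate `v_init(r) = (1+o(1))·(n-1)/(-4 log r)` stays above
`v̄_λ(r) = λ(n-1)/(4(-log r))` for small `r` and `t`. -/
theorem stmt0 (n : ℕ) (hn : 2 ≤ n) (lam : ℝ) (hlam : 0 < lam ∧ lam < 1)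
    (r₁ t₁ : ℝ) (hr₁ : r₁ ∈ Ioo (0:ℝ) 1) (ht₁ : 0 < t₁)
    (v : ℝ → ℝ → ℝ) (vinit : ℝ → ℝ)
    (hsmooth : ContDiffOn ℝ (⊤ : ℕ∞) (fun p : ℝ × ℝ => v p.1 p.2) (Ioc 0 r₁ ×ˢ Icc 0 t₁))
    (hnonneg : ∀ r ∈ Ioc (0:ℝ) r₁, ∀ t ∈ Icc (0:ℝ) t₁, 0 ≤ v r t)
    (hineq : ∀ r ∈ Ioc (0:ℝ) r₁, ∀ t ∈ Ioc (0:ℝ) t₁,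
      Fop n (fun ρ => v ρ t) r ≤ deriv (fun s => v r s) t)
    (hinit_nonneg : ∀ r ∈ Ioc (0:ℝ) r₁, 0 ≤ vinit r)
    (hinit : ∀ r ∈ Ioc (0:ℝ) r₁, vinit r ≤ v r 0)
    (hasymp : Tendsto (fun r => vinit r / (((n:ℝ) - 1) / (-4 * Real.log r)))
      (nhdsWithin 0 (Ioi 0)) (nhds 1)) :
    ∃ r₀ ∈ Ioc (0:ℝ) r₁, ∃ t₀ ∈ Ioc (0:ℝ) t₁,
      ∀ r ∈ Ioc (0:ℝ) r₀, ∀ t ∈ Icc (0:ℝ) t₀,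
        lam * ((n:ℝ) - 1) / (4 * (-Real.log r)) ≤ v r t := by
  obtain ⟨hlam0, hlam1⟩ := hlam
  obtain ⟨hr₁0, hr₁1⟩ := hr₁
  obtain ⟨b, hbdef⟩ : ∃ b : ℝ, b = (n:ℝ) - 1 := ⟨_, rfl⟩
  have hb : 1 ≤ b := by
    have : (2:ℝ) ≤ (n:ℝ) := by exact_mod_cast hn
    rw [hbdef]; linarith
  have hb0 : 0 < b := by linarith
  obtain ⟨lam', hlam'def⟩ : ∃ x : ℝ, x = (1 + 2*lam)/3 := ⟨_, rfl⟩
  obtain ⟨lam'', hlam''def⟩ : ∃ x : ℝ, x = (2 + lam)/3 := ⟨_, rfl⟩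
  have hlam'0 : 0 < lam' := by rw [hlam'def]; linarith
  have hlamlt : lam < lam' := by rw [hlam'def]; linarith
  have hlam'lt : lam' < lam'' := by rw [hlam'def, hlam''def]; linarith
  have hlam''1 : lam'' < 1 := by rw [hlam''def]; linarith
  obtain ⟨c, hcdef⟩ : ∃ x : ℝ, x = lam' * b / 4 := ⟨_, rfl⟩
  have hc : 0 < c := by rw [hcdef]; positivity
  have hcb : 4*c < b := by
    have h1 : lam' * b < 1 * b := by
      apply mul_lt_mul_of_pos_right _ hb0
      rw [hlam'def]; linarith
    rw [hcdef]; linarith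
  set w : ℝ → ℝ := fun r => c / (-Real.log r) with hwdef
  rw [← hbdef] at hasymp ⊢
  -- Step 1: from hasymp, get r₂ such that vinit dominates lam'' * v₀ on (0, r₂]
  have hev : ∀ᶠ r in 𝓝[>] (0:ℝ), lam'' ≤ vinit r / (b / (-4 * Real.log r)) :=
    hasymp.eventually (eventually_ge_nhds hlam''1)
  obtain ⟨r₂, hr₂mem, hr₂sub⟩ := mem_nhdsGT_iff_exists_Ioc_subset.1 hev
  have hr₂0 : 0 < r₂ := hr₂mem
  -- Step 2: choose r₀
  set r₀ : ℝ := min (min r₂ (r₁/2)) (Real.exp (-(1+2*c))) with hr₀def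
  have hr₀0 : 0 < r₀ := lt_min (lt_min hr₂0 (by linarith)) (Real.exp_pos _)
  have hr₀r₁ : r₀ < r₁ :=
    lt_of_le_of_lt (le_trans (min_le_left _ _) (min_le_right _ _)) (by linarith)
  have hr₀r₂ : r₀ ≤ r₂ := le_trans (min_le_left _ _) (min_le_left _ _)
  have hr₀log : Real.log r₀ ≤ -(1+2*c) := by
    calc Real.log r₀ ≤ Real.log (Real.exp (-(1+2*c))) := by
          apply (Real.log_le_log_iff hr₀0 (Real.exp_pos _)).2 (min_le_right _ _)
      _ = -(1+2*c) := Real.log_exp _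
  have hr₀1 : r₀ < 1 := by
    have h1 : Real.log r₀ < 0 := by linarith
    calc r₀ = Real.exp (Real.log r₀) := (Real.exp_log hr₀0).symm
      _ < 1 := by rw [← Real.exp_zero]; exact Real.exp_lt_exp.2 h1
  -- basic facts for r ∈ Ioc 0 r₀
  have hL : ∀ r ∈ Ioc (0:ℝ) r₀, 1 + 2*c ≤ -Real.log r := by
    intro r hr
    have : Real.log r ≤ Real.log r₀ := (Real.log_le_log_iff hr.1 hr₀0).2 hr.2
    linarith
  have hLpos : ∀ r ∈ Ioc (0:ℝ) r₀, 0 < -Real.log r := fun r hr => by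
    have := hL r hr; linarith
  -- vinit domination on (0, r₀]
  have hvinit : ∀ r ∈ Ioc (0:ℝ) r₀, lam'' * b / (4 * (-Real.log r)) ≤ vinit r := by
    intro r hr
    have hLr := hLpos r hr
    have hrat := hr₂sub ⟨hr.1, le_trans hr.2 hr₀r₂⟩
    have hv₀pos : 0 < b / (-4 * Real.log r) := by
      apply div_pos hb0; linarith
    have h2 := (le_div_iff₀ hv₀pos).1 hrat
    calc lam'' * b / (4 * (-Real.log r)) = lam'' * (b / (-4 * Real.log r)) := by ring
      _ ≤ vinit r := h2
  have hwv : ∀ r ∈ Ioc (0:ℝ) r₀, w r ≤ vinit r := by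
    intro r hr
    refine le_trans ?_ (hvinit r hr)
    have hLr := hLpos r hr
    simp only [hwdef]
    rw [div_le_div_iff₀ hLr (by linarith : (0:ℝ) < 4 * (-Real.log r)), hcdef]
    nlinarith [mul_le_mul_of_nonneg_right
      (mul_le_mul_of_nonneg_right hlam'lt.le hb0.le) hLr.le]
  -- Step 3: choose t₀ using continuity at (r₀, 0)
  have hr₀Ioc : r₀ ∈ Ioc (0:ℝ) r₁ := ⟨hr₀0, hr₀r₁.le⟩
  have hwr₀lt : w r₀ < v r₀ 0 := by
    have h1 := hwv r₀ ⟨hr₀0, le_refl _⟩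
    have h2 := hvinit r₀ ⟨hr₀0, le_refl _⟩
    have h3 := hinit r₀ hr₀Ioc
    have hLr := hLpos r₀ ⟨hr₀0, le_refl _⟩
    have hstrict : w r₀ < lam'' * b / (4 * (-Real.log r₀)) := by
      simp only [hwdef]
      rw [div_lt_div_iff₀ hLr (by linarith : (0:ℝ) < 4 * (-Real.log r₀)), hcdef]
      nlinarith [mul_lt_mul_of_pos_right
        (mul_lt_mul_of_pos_right hlam'lt hb0) hLr]
    linarith
  have hcontv : ContinuousOn (fun p : ℝ × ℝ => v p.1 p.2) (Ioc 0 r₁ ×ˢ Icc 0 t₁) :=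
    hsmooth.continuousOn
  have hcont0 : ContinuousWithinAt (fun t => v r₀ t) (Icc 0 t₁) 0 := by
    have : ContinuousOn (fun t => v r₀ t) (Icc 0 t₁) := by
      have hg : Continuous (fun t : ℝ => ((r₀ : ℝ), t)) := by fun_prop
      exact hcontv.comp hg.continuousOn (fun t ht => ⟨hr₀Ioc, ht⟩)
    exact this 0 ⟨le_refl 0, ht₁.le⟩
  have hev0 : ∀ᶠ t in 𝓝[Icc 0 t₁] (0:ℝ), w r₀ < v r₀ t :=
    hcont0.eventually (eventually_gt_nhds hwr₀lt)
  obtain ⟨η, hη0, hηsub⟩ := Metric.mem_nhdsWithin_iff.1 hev0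
  set t₀ : ℝ := min (t₁/2) (η/2) with ht₀def
  have ht₀0 : 0 < t₀ := lt_min (by linarith) (by linarith)
  have ht₀t₁ : t₀ < t₁ := lt_of_le_of_lt (min_le_left _ _) (by linarith)
  have hbt : ∀ t ∈ Icc (0:ℝ) t₀, w r₀ ≤ v r₀ t := by
    intro t ht
    have h1 : t ∈ Metric.ball (0:ℝ) η := by
      rw [Metric.mem_ball, Real.dist_eq, sub_zero, abs_of_nonneg ht.1]
      have : t₀ ≤ η/2 := min_le_right _ _
      linarith [ht.2]
    have h2 : t ∈ Icc (0:ℝ) t₁ := ⟨ht.1, le_trans ht.2 (by linarith)⟩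
    exact (hηsub ⟨h1, h2⟩).le
  -- Step 4: main claim
  have hmain : ∀ r ∈ Ioc (0:ℝ) r₀, ∀ t ∈ Icc (0:ℝ) t₀, w r ≤ v r t := by
    by_contra hcon
    push_neg at hcon
    obtain ⟨rh, hrh, th, hth, hbad⟩ := hcon
    obtain ⟨ε, hεdef⟩ : ∃ x : ℝ, x = (w rh - v rh th)/2 := ⟨_, rfl⟩
    have hε0 : 0 < ε := by rw [hεdef]; linarith
    obtain ⟨σ, hσdef⟩ : ∃ x : ℝ, x = ε / t₀ := ⟨_, rfl⟩
    have hσ0 : 0 < σ := hσdef ▸ div_pos hε0 ht₀0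
    have hσt₀ : σ * t₀ = ε := by rw [hσdef]; field_simp
    obtain ⟨h, hhdef⟩ : ∃ f : ℝ × ℝ → ℝ, f = fun p => v p.1 p.2 - w p.1 + σ * p.2 := ⟨_, rfl⟩
    obtain ⟨δ, hδdef⟩ : ∃ x : ℝ, x = Real.exp (-(c/ε)) := ⟨_, rfl⟩
    have hδ0 : 0 < δ := hδdef ▸ Real.exp_pos _
    have hδbound : ∀ p : ℝ × ℝ, p.1 ∈ Ioc (0:ℝ) r₀ → p.2 ∈ Icc (0:ℝ) t₀ →
        h p ≤ -ε → δ ≤ p.1 := by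
      intro p hp1 hp2 hp
      have hv0 : 0 ≤ v p.1 p.2 :=
        hnonneg p.1 ⟨hp1.1, le_trans hp1.2 hr₀r₁.le⟩ p.2 ⟨hp2.1, le_trans hp2.2 ht₀t₁.le⟩
      have hσp : 0 ≤ σ * p.2 := mul_nonneg hσ0.le hp2.1
      have hwp : ε ≤ w p.1 := by rw [hhdef] at hp; simp only at hp; linarith
      have hLp := hLpos p.1 hp1
      have hLle : -Real.log p.1 ≤ c/ε := by
        simp only [hwdef] at hwp
        have h2 := (le_div_iff₀ hLp).1 hwp
        rw [le_div_iff₀ hε0]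
        nlinarith [h2]
      rw [hδdef]
      calc Real.exp (-(c/ε)) ≤ Real.exp (Real.log p.1) := Real.exp_le_exp.2 (by linarith)
        _ = p.1 := Real.exp_log hp1.1
    have hbadh : h (rh, th) ≤ -ε := by
      have h1 : σ * th ≤ σ * t₀ := mul_le_mul_of_nonneg_left hth.2 hσ0.le
      rw [hhdef]
      simp only
      linarith [hεdef, hσt₀]
    have hδrh : δ ≤ rh := hδbound (rh, th) hrh hth hbadh
    have hδr₀ : δ ≤ r₀ := le_trans hδrh hrh.2
    obtain ⟨K, hKdef⟩ : ∃ s : Set (ℝ × ℝ), s = Icc δ r₀ ×ˢ Icc 0 t₀ := ⟨_, rfl⟩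
    have hKsub : K ⊆ Ioc 0 r₁ ×ˢ Icc 0 t₁ := by
      rw [hKdef]
      rintro ⟨p1, p2⟩ ⟨h1, h2⟩
      exact ⟨⟨lt_of_lt_of_le hδ0 h1.1, le_trans h1.2 hr₀r₁.le⟩,
        ⟨h2.1, le_trans h2.2 ht₀t₁.le⟩⟩
    have hKcomp : IsCompact K := hKdef ▸ isCompact_Icc.prod isCompact_Icc
    have hwcont : ContinuousOn w (Icc δ r₀) := by
      intro x hx
      have hx0 : 0 < x := lt_of_lt_of_le hδ0 hx.1
      have hx1 : x < 1 := lt_of_le_of_lt hx.2 hr₀1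
      have hlx : Real.log x < 0 := Real.log_neg hx0 hx1
      have hca : ContinuousAt w x := by
        rw [hwdef]
        apply ContinuousAt.div continuousAt_const
          ((Real.continuousAt_log hx0.ne').neg)
        simpa using hlx.ne
      exact hca.continuousWithinAt
    have hhcont : ContinuousOn h K := by
      rw [hhdef]
      apply ContinuousOn.add
      · apply ContinuousOn.sub (hcontv.mono hKsub)
        apply ContinuousOn.comp hwcont continuous_fst.continuousOn
        intro p hp
        rw [hKdef] at hp
        exact hp.1
      · exact (continuous_const.mul continuous_snd).continuousOn
    obtain ⟨A, hAdef⟩ : ∃ s : Set (ℝ × ℝ), s = K ∩ h ⁻¹' (Iic (-ε)) := ⟨_, rfl⟩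
    have hAclosed : IsClosed A := by
      rw [hAdef]
      exact hhcont.preimage_isClosed_of_isClosed
        (hKdef ▸ (isClosed_Icc.prod isClosed_Icc)) isClosed_Iic
    have hAsubK : A ⊆ K := hAdef ▸ inter_subset_left
    have hAcomp : IsCompact A := hKcomp.of_isClosed_subset hAclosed hAsubK
    have hAmem : ∀ p : ℝ × ℝ, p ∈ A ↔ (p ∈ K ∧ h p ≤ -ε) := by
      intro p; rw [hAdef]; rfl
    have hAne : A.Nonempty := by
      refine ⟨(rh, th), (hAmem _).2 ⟨?_, hbadh⟩⟩
      rw [hKdef]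
      exact ⟨⟨hδrh, hrh.2⟩, hth⟩
    obtain ⟨q, hqA, hqmin⟩ := hAcomp.exists_isMinOn hAne continuous_snd.continuousOn
    obtain ⟨ts, htsdef⟩ : ∃ x : ℝ, x = q.2 := ⟨_, rfl⟩
    have hqK : q ∈ K := ((hAmem q).1 hqA).1
    have hqK' : q.1 ∈ Icc δ r₀ ∧ q.2 ∈ Icc (0:ℝ) t₀ := by
      rw [hKdef] at hqK; exact ⟨hqK.1, hqK.2⟩
    have hts0 : 0 ≤ ts := htsdef ▸ hqK'.2.1
    have htst₀ : ts ≤ t₀ := htsdef ▸ hqK'.2.2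
    have htsIcc : ts ∈ Icc (0:ℝ) t₁ := ⟨hts0, le_trans htst₀ ht₀t₁.le⟩
    have hts_pos : 0 < ts := by
      rcases lt_or_eq_of_le hts0 with hlt | heq
      · exact hlt
      exfalso
      have hq1 : q.1 ∈ Ioc (0:ℝ) r₀ := ⟨lt_of_lt_of_le hδ0 hqK'.1.1, hqK'.1.2⟩
      have h1 := hwv q.1 hq1
      have h2 := hinit q.1 ⟨hq1.1, le_trans hq1.2 hr₀r₁.le⟩
      have h3 : h q ≤ -ε := ((hAmem q).1 hqA).2
      have hq2 : q.2 = 0 := by rw [← htsdef, ← heq]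
      rw [hhdef] at h3
      simp only [hq2, mul_zero] at h3
      linarith
    -- spatial minimum at time ts
    have hφcont : ContinuousOn (fun ρ => h (ρ, ts)) (Icc δ r₀) := by
      have hg : Continuous (fun ρ : ℝ => ((ρ, ts) : ℝ × ℝ)) := by fun_prop
      apply ContinuousOn.comp hhcont hg.continuousOn
      intro ρ hρ
      rw [hKdef]
      exact ⟨hρ, ⟨hts0, htst₀⟩⟩
    obtain ⟨rs, hrsmem, hrsmin⟩ :=
      isCompact_Icc.exists_isMinOn ⟨δ, ⟨le_refl δ, hδr₀⟩⟩ hφcont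
    have hφrs : h (rs, ts) ≤ -ε := by
      have h1 : h (rs, ts) ≤ h (q.1, ts) := hrsmin hqK'.1
      have h2 : ((q.1, ts) : ℝ × ℝ) = q := by rw [htsdef]
      rw [h2] at h1
      exact le_trans h1 ((hAmem q).1 hqA).2
    have hbd1 : -ε < h (r₀, ts) := by
      have h1 := hbt ts ⟨hts0, htst₀⟩
      have hσts : 0 ≤ σ * ts := mul_nonneg hσ0.le hts0
      rw [hhdef]
      simp only
      linarith
    have hbd2 : -ε < h (δ, ts) := by
      have hwδ : w δ = ε := by
        simp only [hwdef, hδdef]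
        rw [Real.log_exp]
        field_simp
      have hv0 : 0 ≤ v δ ts := hnonneg δ ⟨hδ0, le_trans hδr₀ hr₀r₁.le⟩ ts htsIcc
      have hσts : 0 < σ * ts := mul_pos hσ0 hts_pos
      rw [hhdef]
      simp only
      rw [hwδ]
      linarith
    have hrs1 : δ < rs := by
      rcases lt_or_eq_of_le hrsmem.1 with hlt | heq
      · exact hlt
      · exfalso; rw [heq] at hbd2; linarith
    have hrs2 : rs < r₀ := by
      rcases lt_or_eq_of_le hrsmem.2 with hlt | heq
      · exact hlt
      · exfalso; rw [heq] at hφrs; linarith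
    have hrs0 : 0 < rs := lt_trans hδ0 hrs1
    have hrsr₁ : rs < r₁ := lt_trans hrs2 hr₀r₁
    have hrs_lt1 : rs < 1 := lt_trans hrs2 hr₀1
    -- smoothness near (rs, ts)
    have hts_t₁ : ts ∈ Ioc (0:ℝ) t₁ := ⟨hts_pos, le_trans htst₀ ht₀t₁.le⟩
    have hSnhds : Ioc 0 r₁ ×ˢ Icc 0 t₁ ∈ 𝓝 ((rs, ts) : ℝ × ℝ) := by
      apply mem_nhds_iff.2
      refine ⟨Ioo 0 r₁ ×ˢ Ioo 0 t₁, ?_, isOpen_Ioo.prod isOpen_Ioo,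
        ⟨⟨hrs0, hrsr₁⟩, ⟨hts_pos, lt_of_le_of_lt htst₀ ht₀t₁⟩⟩⟩
      rintro ⟨p1, p2⟩ ⟨h1, h2⟩
      exact ⟨⟨h1.1, h1.2.le⟩, ⟨h2.1.le, h2.2.le⟩⟩
    have hCA : ContDiffAt ℝ (⊤ : ℕ∞) (fun p : ℝ × ℝ => v p.1 p.2) (rs, ts) :=
      hsmooth.contDiffAt hSnhds
    set V : ℝ → ℝ := fun ρ => v ρ ts with hVdef
    have hVC : ContDiffAt ℝ 2 V rs := by
      have hg : ContDiffAt ℝ (⊤ : ℕ∞) (fun ρ : ℝ => ((ρ, ts) : ℝ × ℝ)) rs :=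
        ContDiffAt.prodMk contDiffAt_id contDiffAt_const
      exact (hCA.comp rs hg).of_le (m := 2) (WithTop.coe_le_coe.2 le_top)
    obtain ⟨u, hu_nhds, hVu⟩ := hVC.contDiffOn le_rfl (by simp)
    obtain ⟨U, hUdef⟩ : ∃ s : Set ℝ, s = interior u ∩ Ioo 0 1 := ⟨_, rfl⟩
    have hUopen : IsOpen U := hUdef ▸ isOpen_interior.inter isOpen_Ioo
    have hrsU : rs ∈ U := by
      rw [hUdef]
      exact ⟨mem_interior_iff_mem_nhds.2 hu_nhds, ⟨hrs0, hrs_lt1⟩⟩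
    have hVU : ContDiffOn ℝ 2 V U := by
      apply hVu.mono
      rw [hUdef]
      exact inter_subset_left.trans interior_subset
    have hwU : ContDiffOn ℝ 2 w U := by
      apply (hUopen.contDiffOn_iff).2
      intro x hx
      rw [hUdef] at hx
      have hx0 : 0 < x := hx.2.1
      have hlx : Real.log x < 0 := Real.log_neg hx0 hx.2.2
      rw [hwdef]
      exact contDiffAt_const.div ((Real.contDiffAt_log.2 hx0.ne').neg)
        (by simpa using hlx.ne)
    set ψ : ℝ → ℝ := fun ρ => V ρ - w ρ + σ * ts with hψdef
    have hfeq : (fun ρ => h (ρ, ts)) = ψ := by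
      funext ρ
      simp only [hψdef, hhdef, hVdef]
    have hψmin : IsLocalMin ψ rs := by
      have : IsMinOn ψ (Icc δ r₀) rs := hfeq ▸ hrsmin
      exact this.isLocalMin (Icc_mem_nhds hrs1 hrs2)
    -- first derivative vanishing
    have hwd : HasDerivAt w (c / (rs * (Real.log rs)^2)) rs := by
      rw [hwdef]; exact hasDerivAt_w c hrs0 hrs_lt1
    have hVdiff : DifferentiableAt ℝ V rs := hVC.differentiableAt two_ne_zero
    have hψd0 : deriv ψ rs = 0 := hψmin.deriv_eq_zero
    have hderivψ : deriv ψ rs = deriv V rs - c / (rs * (Real.log rs)^2) := by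
      rw [hψdef]
      rw [deriv_add_const]
      rw [deriv_fun_sub hVdiff hwd.differentiableAt, hwd.deriv]
    have hDV : deriv V rs = c / (rs * (Real.log rs)^2) := by
      rw [hderivψ] at hψd0; linarith
    -- second derivative comparison
    have hψ2 : ContDiffOn ℝ 2 ψ U := by
      rw [hψdef]
      exact (hVU.sub hwU).add contDiffOn_const
    have hψ'' : 0 ≤ deriv (deriv ψ) rs :=
      secondDeriv_nonneg_of_isLocalMin hUopen hrsU hψ2 hψmin
    have hEq : deriv ψ =ᶠ[𝓝 rs] fun ρ => deriv V ρ - c / (ρ * (Real.log ρ)^2) := by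
      filter_upwards [hUopen.mem_nhds hrsU] with x hx
      have hx' := hx
      rw [hUdef] at hx'
      have hx0 : 0 < x := hx'.2.1
      have hx1 : x < 1 := hx'.2.2
      have hwx : HasDerivAt w (c / (x * (Real.log x)^2)) x := by
        rw [hwdef]; exact hasDerivAt_w c hx0 hx1
      have hVx : DifferentiableAt ℝ V x :=
        ((hVU.differentiableOn two_ne_zero).differentiableAt (hUopen.mem_nhds hx))
      rw [hψdef]
      rw [deriv_add_const]
      rw [deriv_fun_sub hVx hwx.differentiableAt, hwx.deriv]
    have hw1d : HasDerivAt (fun x => c / (x * (Real.log x)^2))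
        (-(c * ((Real.log rs)^2 + 2 * Real.log rs)) / (rs * (Real.log rs)^2)^2) rs :=
      hasDerivAt_w1 c hrs0 hrs_lt1
    have hdVdiff : DifferentiableAt ℝ (deriv V) rs := by
      have h1 : ContDiffOn ℝ 1 (deriv V) U := hVU.deriv_of_isOpen hUopen (by norm_num)
      exact ((h1.differentiableOn one_ne_zero).differentiableAt (hUopen.mem_nhds hrsU))
    have h2ψ : deriv (deriv ψ) rs = deriv (deriv V) rs
        - (-(c * ((Real.log rs)^2 + 2 * Real.log rs)) / (rs * (Real.log rs)^2)^2) := by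
      rw [hEq.deriv_eq]
      rw [deriv_fun_sub hdVdiff hw1d.differentiableAt, hw1d.deriv]
    have hV'' : -(c * ((Real.log rs)^2 + 2 * Real.log rs)) / (rs * (Real.log rs)^2)^2
        ≤ deriv (deriv V) rs := by
      rw [h2ψ] at hψ''; linarith
    -- time derivative at (rs, ts)
    have hTC : ContDiffAt ℝ 1 (fun s => v rs s) ts := by
      have hg : ContDiffAt ℝ (⊤ : ℕ∞) (fun s : ℝ => ((rs, s) : ℝ × ℝ)) ts :=
        ContDiffAt.prodMk contDiffAt_const contDiffAt_id
      exact (hCA.comp ts hg).of_le (by simp)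
    have hT : HasDerivAt (fun s => v rs s) (deriv (fun s => v rs s) ts) ts :=
      (hTC.differentiableAt one_ne_zero).hasDerivAt
    have hlin : HasDerivAt (fun s : ℝ => σ * s - w rs) σ ts := by
      simpa using ((hasDerivAt_id ts).const_mul σ).sub_const (w rs)
    have hf : HasDerivAt (fun s => v rs s - w rs + σ * s)
        (deriv (fun s => v rs s) ts + σ) ts := by
      have h1 := hT.add hlin
      have h2 : (fun s => v rs s - w rs + σ * s)
          = fun s => v rs s + (σ * s - w rs) := by funext s; ring
      rw [h2]
      exact h1
    have hlt : ∀ᶠ s in 𝓝[<] ts, (fun s => v rs s - w rs + σ * s) ts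
        ≤ (fun s => v rs s - w rs + σ * s) s := by
      have hmem : Ioo 0 ts ∈ 𝓝[<] ts :=
        mem_nhdsLT_iff_exists_Ioo_subset.2 ⟨0, hts_pos, subset_rfl⟩
      filter_upwards [hmem] with s hs
      have hsK : ((rs, s) : ℝ × ℝ) ∈ K := by
        rw [hKdef]
        exact ⟨⟨hrs1.le, hrs2.le⟩, ⟨hs.1.le, le_trans hs.2.le htst₀⟩⟩
      have hnotA : ¬ (h (rs, s) ≤ -ε) := by
        intro hcon2
        have : ((rs, s) : ℝ × ℝ) ∈ A := (hAmem _).2 ⟨hsK, hcon2⟩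
        have h5 : ts ≤ s := by rw [htsdef]; exact hqmin this
        exact absurd h5 (not_le.2 hs.2)
      have hval : h (rs, ts) = v rs ts - w rs + σ * ts := by rw [hhdef]
      have hval2 : h (rs, s) = v rs s - w rs + σ * s := by rw [hhdef]
      show v rs ts - w rs + σ * ts ≤ v rs s - w rs + σ * s
      rw [hval] at hφrs
      rw [hval2] at hnotA
      push_neg at hnotA
      linarith
    have hdt : deriv (fun s => v rs s) ts + σ ≤ 0 := deriv_nonpos_left hf hlt
    -- the differential inequality gives a contradiction
    have hFle := hineq rs ⟨hrs0, hrsr₁.le⟩ ts hts_t₁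
    have hFneg : Fop n (fun ρ => v ρ ts) rs ≤ -σ := by linarith
    -- rewrite in terms of L, aa
    obtain ⟨L, hLdef⟩ : ∃ x : ℝ, x = -Real.log rs := ⟨_, rfl⟩
    have hLrs : 1 + 2*c ≤ L := hLdef ▸ hL rs ⟨hrs0, hrs2.le⟩
    have hL0' : 0 < L := by linarith
    have hlogrs : Real.log rs = -L := by rw [hLdef]; ring
    obtain ⟨aa, haadef⟩ : ∃ x : ℝ, x = w rs - V rs := ⟨_, rfl⟩
    have hwrs : w rs = c / L := by rw [hwdef, hLdef]
    have haa0 : 0 < aa := by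
      have h1 : h (rs, ts) = v rs ts - w rs + σ * ts := by rw [hhdef]
      rw [h1] at hφrs
      have hσts : 0 < σ * ts := mul_pos hσ0 hts_pos
      have h2 : V rs = v rs ts := by rw [hVdef]
      rw [haadef, h2]
      linarith
    have haaL : aa * L ≤ c := by
      have hv0 : 0 ≤ V rs := hnonneg rs ⟨hrs0, hrsr₁.le⟩ ts htsIcc
      have h1 : aa ≤ c / L := by rw [haadef, hwrs]; linarith
      calc aa * L ≤ (c/L) * L := mul_le_mul_of_nonneg_right h1 hL0'.le
        _ = c := by field_simp
    have hVval : V rs = c/L - aa := by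
      have h1 : V rs = w rs - aa := by rw [haadef]; ring
      rw [h1, hwrs]
    have hWD : c*(2 - L)/(rs^2*L^3) ≤ deriv (deriv V) rs := by
      refine le_trans (le_of_eq ?_) hV''
      rw [hlogrs]
      have hrsne : rs ≠ 0 := hrs0.ne'
      have hLne : L ≠ 0 := hL0'.ne'
      field_simp
      ring
    have hD : deriv V rs = c/(rs*L^2) := by
      rw [hDV, hlogrs]
      ring_nf
    have hkey := key_ineq b c rs L aa (deriv (deriv V) rs) hb hc hcb hrs0 hLrs haa0 haaL hWD
    have hFopeq : Fop n (fun ρ => v ρ ts) rs = (c/L - aa) * deriv (deriv V) rs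
        - (1/2)*(c/(rs*L^2))^2 + ((b - (c/L - aa))/rs) * (c/(rs*L^2))
        + (2*b/rs^2) * (c/L - aa) * (1 - (c/L - aa)) := by
      rw [← hVdef]
      simp only [Fop]
      rw [← hbdef, hVval, hD]
    rw [hFopeq] at hFneg
    linarith [hkey, hFneg, hσ0]

  -- conclusion
  refine ⟨r₀, ⟨hr₀0, hr₀r₁.le⟩, t₀, ⟨ht₀0, ht₀t₁.le⟩, ?_⟩
  intro r hr t ht
  refine le_trans ?_ (hmain r hr t ht)
  have hLr := hLpos r hr
  simp only [hwdef]
  rw [div_le_div_iff₀ (by linarith : (0:ℝ) < 4 * (-Real.log r)) hLr, hcdef]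
  nlinarith [mul_le_mul_of_nonneg_right
    (mul_le_mul_of_nonneg_right hlamlt.le hb0.le) hLr.le]
end

section
/- Let n ≥ 2 be an integer, let r̄ > 0 and t̄ > 0, and set Ξ = [0, r̄] × [0, t̄]. Let v⁻, v⁺ : Ξ → [0,∞) be smooth functions satisfying ∂_t v⁻(r,t) ≤ F[v⁻(·,t)](r) and ∂_t v⁺(r,t) ≥ F[v⁺(·,t)](r) for all 0 < r < r̄ and 0 < t ≤ t̄. Assume there is a constant C < ∞ such that at least one of the two functions w ∈ {v⁻, v⁺} satisfies ∂²_r w(r,t) ≤ C, −∂_r w(r,t)/(2r) ≤ C, and (1 − w(r,t))/r² ≤ C for all 0 < r ≤ r̄ and 0 ≤ t ≤ t̄. If v⁻(r̄, t) ≤ v⁺(r̄, t) for all 0 ≤ t ≤ t̄, and v⁻(r, 0) ≤ v⁺(r, 0) for all 0 ≤ r ≤ r̄, then v⁻(r,t) ≤ v⁺(r,t) for all (r,t) ∈ Ξ. -/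
open Real Set Filter

noncomputable def Fval (n : ℕ) (a p q r : ℝ) : ℝ :=
  a * q - (1/2) * p^2 + (((n : ℝ) - 1 - a) / r) * p + (2 * ((n : ℝ) - 1) / r^2) * a * (1 - a)

lemma est_vm (n : ℕ) (hn : 2 ≤ n) {C₀ r a b pa pb qa qb : ℝ}
    (hr : 0 < r) (hd : 0 < a - b)
    (h1 : qa ≤ C₀) (h2 : -pa / (2*r) ≤ C₀) (h3 : (1-a)/r^2 ≤ C₀) :
    Fval n a pa qa r - Fval n b pb qb r ≤
      (2*(n:ℝ)+1)*C₀*(a-b) + b*(qa-qb)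
        + (pa-pb)*(((n:ℝ)-1-b)/r - (1/2)*(pa+pb))
        - 2*((n:ℝ)-1)*(a-b)*b/r^2 := by
  have hn1 : (1:ℝ) ≤ (n:ℝ) - 1 := by
    have : (2:ℝ) ≤ (n:ℝ) := by exact_mod_cast hn
    linarith
  have key : Fval n a pa qa r - Fval n b pb qb r
      - (b*(qa-qb) + (pa-pb)*(((n:ℝ)-1-b)/r - (1/2)*(pa+pb)) - 2*((n:ℝ)-1)*(a-b)*b/r^2)
      = (a-b)*qa + 2*(a-b)*(-pa/(2*r)) + 2*((n:ℝ)-1)*((a-b)*((1-a)/r^2)) := by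
    unfold Fval
    field_simp
    ring
  have b1 : (a-b)*qa ≤ (a-b)*C₀ := mul_le_mul_of_nonneg_left h1 hd.le
  have b2 : 2*(a-b)*(-pa/(2*r)) ≤ 2*(a-b)*C₀ := by nlinarith
  have b3 : 2*((n:ℝ)-1)*((a-b)*((1-a)/r^2)) ≤ 2*((n:ℝ)-1)*((a-b)*C₀) := by
    have h4 : (a-b)*((1-a)/r^2) ≤ (a-b)*C₀ := mul_le_mul_of_nonneg_left h3 hd.le
    nlinarith
  have sum : (2*(n:ℝ)+1)*C₀*(a-b) = (a-b)*C₀ + 2*(a-b)*C₀ + 2*((n:ℝ)-1)*((a-b)*C₀) := by ring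
  linarith [key]

lemma est_vp (n : ℕ) (hn : 2 ≤ n) {C₀ r a b pa pb qa qb : ℝ}
    (hr : 0 < r) (hd : 0 < a - b)
    (h1 : qb ≤ C₀) (h2 : -pb / (2*r) ≤ C₀) (h3 : (1-b)/r^2 ≤ C₀) :
    Fval n a pa qa r - Fval n b pb qb r ≤
      (2*(n:ℝ)+1)*C₀*(a-b) + a*(qa-qb)
        + (pa-pb)*(((n:ℝ)-1-a)/r - (1/2)*(pa+pb))
        - 2*((n:ℝ)-1)*(a-b)*a/r^2 := by
  have hn1 : (1:ℝ) ≤ (n:ℝ) - 1 := by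
    have : (2:ℝ) ≤ (n:ℝ) := by exact_mod_cast hn
    linarith
  have key : Fval n a pa qa r - Fval n b pb qb r
      - (a*(qa-qb) + (pa-pb)*(((n:ℝ)-1-a)/r - (1/2)*(pa+pb)) - 2*((n:ℝ)-1)*(a-b)*a/r^2)
      = (a-b)*qb + 2*(a-b)*(-pb/(2*r)) + 2*((n:ℝ)-1)*((a-b)*((1-b)/r^2)) := by
    unfold Fval
    field_simp
    ring
  have b1 : (a-b)*qb ≤ (a-b)*C₀ := mul_le_mul_of_nonneg_left h1 hd.le
  have b2 : 2*(a-b)*(-pb/(2*r)) ≤ 2*(a-b)*C₀ := by nlinarith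
  have b3 : 2*((n:ℝ)-1)*((a-b)*((1-b)/r^2)) ≤ 2*((n:ℝ)-1)*((a-b)*C₀) := by
    have h4 : (a-b)*((1-b)/r^2) ≤ (a-b)*C₀ := mul_le_mul_of_nonneg_left h3 hd.le
    nlinarith
  have sum : (2*(n:ℝ)+1)*C₀*(a-b) = (a-b)*C₀ + 2*(a-b)*C₀ + 2*((n:ℝ)-1)*((a-b)*C₀) := by ring
  linarith [key]

lemma est_interior (n : ℕ) (hn : 2 ≤ n) {C₀ r a b pa pb qa qb : ℝ}
    (hr : 0 < r) (ha : 0 ≤ a) (hb : 0 ≤ b) (hd : 0 < a - b)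
    (hp : pa = pb) (hq : qa - qb ≤ 0)
    (hcase : (qa ≤ C₀ ∧ -pa/(2*r) ≤ C₀ ∧ (1-a)/r^2 ≤ C₀) ∨
             (qb ≤ C₀ ∧ -pb/(2*r) ≤ C₀ ∧ (1-b)/r^2 ≤ C₀)) :
    Fval n a pa qa r - Fval n b pb qb r ≤ (2*(n:ℝ)+1)*C₀*(a-b) := by
  have hn1 : (1:ℝ) ≤ (n:ℝ) - 1 := by
    have : (2:ℝ) ≤ (n:ℝ) := by exact_mod_cast hn
    linarith
  have hr2 : (0:ℝ) < r^2 := by positivity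
  rcases hcase with ⟨h1, h2, h3⟩ | ⟨h1, h2, h3⟩
  · have := est_vm n hn (pb := pb) (qb := qb) hr hd h1 h2 h3
    have e1 : b*(qa-qb) ≤ 0 := mul_nonpos_of_nonneg_of_nonpos hb hq
    have e2 : (pa-pb)*(((n:ℝ)-1-b)/r - (1/2)*(pa+pb)) = 0 := by rw [hp]; ring
    have e3 : 0 ≤ 2*((n:ℝ)-1)*(a-b)*b/r^2 := by positivity
    linarith
  · have := est_vp n hn (pa := pa) (qa := qa) hr hd h1 h2 h3
    have e1 : a*(qa-qb) ≤ 0 := mul_nonpos_of_nonneg_of_nonpos ha hq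
    have e2 : (pa-pb)*(((n:ℝ)-1-a)/r - (1/2)*(pa+pb)) = 0 := by rw [hp]; ring
    have e3 : 0 ≤ 2*((n:ℝ)-1)*(a-b)*a/r^2 := by positivity
    linarith


lemma deriv_nonneg_right {f : ℝ → ℝ} {d a x : ℝ} (hd : HasDerivAt f d x) (ha : a < x)
    (hmax : ∀ t ∈ Ico a x, f t ≤ f x) : 0 ≤ d := by
  have hw : HasDerivWithinAt f d (Iio x) x := hd.hasDerivWithinAt
  rw [hasDerivWithinAt_iff_tendsto_slope] at hw
  have hss : (Iio x) \ {x} = Iio x := by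
    apply Set.diff_singleton_eq_self; simp
  rw [hss] at hw
  refine ge_of_tendsto hw ?_
  filter_upwards [Ioo_mem_nhdsLT_of_mem (⟨ha, le_refl x⟩ : x ∈ Ioc a x)] with t ht
  have h1 : f t - f x ≤ 0 := by have := hmax t ⟨ht.1.le, ht.2⟩; linarith
  have h2 : t - x ≤ 0 := by linarith [ht.2]
  rw [slope_def_field]
  exact div_nonneg_iff.mpr (Or.inr ⟨h1, h2⟩)

lemma derivWithin_nonpos_left {f : ℝ → ℝ} {d σ : ℝ} (hσ : 0 < σ)
    (hd : HasDerivWithinAt f d (Icc 0 σ) 0) (hmax : ∀ t ∈ Icc 0 σ, f t ≤ f 0) : d ≤ 0 := by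
  rw [hasDerivWithinAt_iff_tendsto_slope] at hd
  rw [Icc_diff_left, nhdsWithin_Ioc_eq_nhdsGT hσ] at hd
  refine le_of_tendsto hd ?_
  filter_upwards [Ioo_mem_nhdsGT_of_mem (⟨le_refl (0:ℝ), hσ⟩ : (0:ℝ) ∈ Ico 0 σ)] with t ht
  have h1 : f t - f 0 ≤ 0 := by have := hmax t ⟨ht.1.le, ht.2.le⟩; linarith
  have h2 : 0 ≤ t - 0 := by linarith [ht.1]
  rw [slope_def_field]
  exact div_nonpos_of_nonpos_of_nonneg h1 h2

lemma second_deriv_test {f : ℝ → ℝ} {x : ℝ} (hf : ContDiffAt ℝ 3 f x)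
    (hmax : IsLocalMax f x) : deriv (deriv f) x ≤ 0 := by
  by_contra hq
  push_neg at hq
  obtain ⟨u, hu, hcd⟩ := hf.contDiffOn le_rfl (by simp)
  have xU : x ∈ interior u := mem_interior_iff_mem_nhds.2 hu
  have hcd' : ContDiffOn ℝ 3 f (interior u) := hcd.mono interior_subset
  have hg : ContDiffOn ℝ 2 (deriv f) (interior u) :=
    hcd'.deriv_of_isOpen isOpen_interior (by norm_num)
  have hh : ContDiffOn ℝ 1 (deriv (deriv f)) (interior u) :=
    hg.deriv_of_isOpen isOpen_interior (by norm_num)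
  have hcont : ContinuousAt (deriv (deriv f)) x :=
    (hh.continuousOn x xU).continuousAt (isOpen_interior.mem_nhds xU)
  have hev : ∀ᶠ y in nhds x, 0 < deriv (deriv f) y ∧ y ∈ interior u ∧ f y ≤ f x :=
    (continuousAt_const.eventually_lt hcont hq).and
      ((isOpen_interior.eventually_mem xU).and hmax)
  obtain ⟨ε, hε, hball⟩ := Metric.eventually_nhds_iff_ball.mp hev
  have hIoo : ∀ y ∈ Ioo (x-ε) (x+ε),
      0 < deriv (deriv f) y ∧ y ∈ interior u ∧ f y ≤ f x := by
    intro y hy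
    exact hball y (by rw [Real.ball_eq_Ioo]; exact hy)
  have hsubU : Ioo (x-ε) (x+ε) ⊆ interior u := fun y hy => (hIoo y hy).2.1
  have gmono : StrictMonoOn (deriv f) (Ioo (x-ε) (x+ε)) := by
    refine strictMonoOn_of_deriv_pos (convex_Ioo _ _) ((hg.mono hsubU).continuousOn) ?_
    intro y hy
    rw [interior_Ioo] at hy
    exact (hIoo y hy).1
  have hgx : deriv f x = 0 := hmax.deriv_eq_zero
  have hxI : x ∈ Ioo (x-ε) (x+ε) := by constructor <;> linarith
  have hsub2 : Icc x (x+ε/2) ⊆ Ioo (x-ε) (x+ε) := by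
    intro y hy; exact ⟨by linarith [hy.1], by linarith [hy.2]⟩
  have fmono : StrictMonoOn f (Icc x (x+ε/2)) := by
    refine strictMonoOn_of_deriv_pos (convex_Icc _ _)
      ((hcd'.continuousOn).mono (hsub2.trans hsubU)) ?_
    intro y hy
    rw [interior_Icc] at hy
    have hyI : y ∈ Ioo (x-ε) (x+ε) := ⟨by linarith [hy.1], by linarith [hy.2]⟩
    have := gmono hxI hyI hy.1
    rw [hgx] at this
    exact this
  have h1 : f x < f (x+ε/2) :=
    fmono ⟨le_refl x, by linarith⟩ ⟨by linarith, le_refl _⟩ (by linarith)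
  have h2 : f (x+ε/2) ≤ f x := (hIoo _ (hsub2 ⟨by linarith, le_refl _⟩)).2.2
  linarith

lemma second_deriv_test_left {c w z : ℝ → ℝ} {σ : ℝ} (hσ : 0 < σ)
    (hc : ContinuousOn c (Icc 0 σ)) (hw : ContinuousOn w (Icc 0 σ))
    (hcd : ∀ ρ ∈ Ioo (0:ℝ) σ, deriv c ρ = w ρ) (hwd : ∀ ρ ∈ Ioo (0:ℝ) σ, deriv w ρ = z ρ)
    (hz : ContinuousWithinAt z (Icc 0 σ) 0)
    (hw0 : w 0 = 0) (hmax : ∀ ρ ∈ Icc (0:ℝ) σ, c ρ ≤ c 0) : z 0 ≤ 0 := by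
  by_contra hq
  push_neg at hq
  have hev : ∀ᶠ ρ in nhdsWithin 0 (Icc (0:ℝ) σ), 0 < z ρ :=
    Tendsto.eventually_lt tendsto_const_nhds hz hq
  obtain ⟨v, hvopen, hv0, hvsub⟩ := mem_nhdsWithin.mp hev
  obtain ⟨ε, hε, hball⟩ := Metric.isOpen_iff.mp hvopen 0 hv0
  set σ' := min (ε/2) σ with hσ'def
  have hσ' : 0 < σ' := lt_min (by linarith) hσ
  have hσ'σ : σ' ≤ σ := min_le_right _ _
  have hzpos : ∀ ρ ∈ Icc (0:ℝ) σ', 0 < z ρ := by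
    intro ρ hρ
    refine hvsub ⟨hball ?_, hρ.1, le_trans hρ.2 hσ'σ⟩
    rw [Metric.mem_ball, Real.dist_eq, sub_zero, abs_of_nonneg hρ.1]
    calc ρ ≤ σ' := hρ.2
    _ ≤ ε/2 := min_le_left _ _
    _ < ε := by linarith
  have hsub : Icc (0:ℝ) σ' ⊆ Icc (0:ℝ) σ := Icc_subset_Icc le_rfl hσ'σ
  have hsubo : Ioo (0:ℝ) σ' ⊆ Ioo (0:ℝ) σ := Ioo_subset_Ioo le_rfl hσ'σ
  have wmono : StrictMonoOn w (Icc 0 σ') := by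
    refine strictMonoOn_of_deriv_pos (convex_Icc _ _) (hw.mono hsub) ?_
    intro y hy
    rw [interior_Icc] at hy
    rw [hwd y (hsubo hy)]
    exact hzpos y ⟨hy.1.le, hy.2.le⟩
  have cmono : StrictMonoOn c (Icc 0 σ') := by
    refine strictMonoOn_of_deriv_pos (convex_Icc _ _) (hc.mono hsub) ?_
    intro y hy
    rw [interior_Icc] at hy
    rw [hcd y (hsubo hy)]
    have := wmono ⟨le_refl (0:ℝ), hσ'.le⟩ ⟨hy.1.le, hy.2.le⟩ hy.1
    rw [hw0] at this
    exact this
  have h1 : c 0 < c σ' := cmono ⟨le_refl _, hσ'.le⟩ ⟨hσ'.le, le_refl _⟩ hσ'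
  have h2 : c σ' ≤ c 0 := hmax σ' ⟨hσ'.le, hσ'σ⟩
  linarith


lemma deriv_differentiableAt {f : ℝ → ℝ} {x : ℝ} (hf : ContDiffAt ℝ 2 f x) :
    DifferentiableAt ℝ (deriv f) x := by
  obtain ⟨u, hu, hcd⟩ := hf.contDiffOn le_rfl (by simp)
  have xU : x ∈ interior u := mem_interior_iff_mem_nhds.2 hu
  have h1 : ContDiffOn ℝ 1 (deriv f) (interior u) :=
    (hcd.mono interior_subset).deriv_of_isOpen isOpen_interior (by norm_num)
  exact (h1.differentiableOn one_ne_zero x xU).differentiableAt (isOpen_interior.mem_nhds xU)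


lemma Fop_eq_Fval (n : ℕ) (v : ℝ → ℝ) (r : ℝ) :
    Fop n v r = Fval n (v r) (deriv v r) (deriv (deriv v) r) r := rfl

set_option maxHeartbeats 4000000 in
/-- Comparison principle (Lemma "yamm"): if `v⁻` is a nonnegative subsolution and `v⁺` a
nonnegative supersolution of `v_t = F[v]` on `Ξ = [0,r̄] × [0,t̄]`, at least one of them has
`v_rr ≤ C`, `-v_r/(2r) ≤ C`, `(1-v)/r² ≤ C`, and `v⁻ ≤ v⁺` on the right edge and initially,
then `v⁻ ≤ v⁺` throughout `Ξ`. -/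
theorem stmt1 (n : ℕ) (hn : 2 ≤ n) (rb tb : ℝ) (hrb : 0 < rb) (htb : 0 < tb)
    (vm vp : ℝ → ℝ → ℝ)
    (hsm : ContDiffOn ℝ (⊤ : ℕ∞) (fun p : ℝ × ℝ => vm p.1 p.2) (Icc 0 rb ×ˢ Icc 0 tb))
    (hsp : ContDiffOn ℝ (⊤ : ℕ∞) (fun p : ℝ × ℝ => vp p.1 p.2) (Icc 0 rb ×ˢ Icc 0 tb))
    (hnm : ∀ r ∈ Icc (0:ℝ) rb, ∀ t ∈ Icc (0:ℝ) tb, 0 ≤ vm r t)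
    (hnp : ∀ r ∈ Icc (0:ℝ) rb, ∀ t ∈ Icc (0:ℝ) tb, 0 ≤ vp r t)
    (hsub : ∀ r ∈ Ioo (0:ℝ) rb, ∀ t ∈ Ioc (0:ℝ) tb,
      deriv (fun s => vm r s) t ≤ Fop n (fun ρ => vm ρ t) r)
    (hsup : ∀ r ∈ Ioo (0:ℝ) rb, ∀ t ∈ Ioc (0:ℝ) tb,
      Fop n (fun ρ => vp ρ t) r ≤ deriv (fun s => vp r s) t)
    (hC : ∃ C : ℝ,
      (∀ r ∈ Ioc (0:ℝ) rb, ∀ t ∈ Icc (0:ℝ) tb,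
        deriv (deriv (fun ρ => vm ρ t)) r ≤ C ∧
        -(deriv (fun ρ => vm ρ t) r) / (2 * r) ≤ C ∧
        (1 - vm r t) / r^2 ≤ C) ∨
      (∀ r ∈ Ioc (0:ℝ) rb, ∀ t ∈ Icc (0:ℝ) tb,
        deriv (deriv (fun ρ => vp ρ t)) r ≤ C ∧
        -(deriv (fun ρ => vp ρ t) r) / (2 * r) ≤ C ∧
        (1 - vp r t) / r^2 ≤ C))
    (hbdry : ∀ t ∈ Icc (0:ℝ) tb, vm rb t ≤ vp rb t)
    (hinit : ∀ r ∈ Icc (0:ℝ) rb, vm r 0 ≤ vp r 0) :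
    ∀ r ∈ Icc (0:ℝ) rb, ∀ t ∈ Icc (0:ℝ) tb, vm r t ≤ vp r t := by
  obtain ⟨C, hC⟩ := hC
  set C₀ : ℝ := max C 0 with hC₀def
  have hC₀ : 0 ≤ C₀ := le_max_right _ _
  have hCC₀ : C ≤ C₀ := le_max_left _ _
  set K : ℝ := (2*(n:ℝ)+1)*C₀ + 1 with hKdef
  -- the key claim
  have key : ∀ tc ∈ Ioo (0:ℝ) tb, ∀ ε : ℝ, 0 < ε → ∀ r ∈ Icc (0:ℝ) rb, ∀ t ∈ Icc (0:ℝ) tc,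
      exp (-K*t) * (vm r t - vp r t) - ε*t ≤ 0 := by
    intro tc htc ε hε
    by_contra hcon
    push_neg at hcon
    obtain ⟨rx, hrx, tx, htx, hpos⟩ := hcon
    have hΞ'Ξ : (Icc (0:ℝ) rb ×ˢ Icc (0:ℝ) tc) ⊆ (Icc (0:ℝ) rb ×ˢ Icc (0:ℝ) tb) :=
      prod_mono_right (Icc_subset_Icc le_rfl htc.2.le)
    have hψc : ContinuousOn (fun p : ℝ × ℝ => exp (-K*p.2) * (vm p.1 p.2 - vp p.1 p.2) - ε*p.2)
        (Icc (0:ℝ) rb ×ˢ Icc (0:ℝ) tc) := by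
      refine ContinuousOn.sub (ContinuousOn.mul ?_ (ContinuousOn.sub
        (hsm.continuousOn.mono hΞ'Ξ) (hsp.continuousOn.mono hΞ'Ξ))) ?_
      · exact (continuous_exp.comp (continuous_const.mul continuous_snd)).continuousOn
      · exact (continuous_const.mul continuous_snd).continuousOn
    obtain ⟨⟨r0, t0⟩, hmem0, hismax⟩ :=
      (isCompact_Icc.prod isCompact_Icc).exists_isMaxOn
        ⟨(0,0), ⟨⟨le_rfl, hrb.le⟩, ⟨le_rfl, htc.1.le⟩⟩⟩ hψc
    have hmax : ∀ p ∈ (Icc (0:ℝ) rb ×ˢ Icc (0:ℝ) tc),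
        exp (-K*p.2) * (vm p.1 p.2 - vp p.1 p.2) - ε*p.2 ≤
        exp (-K*t0) * (vm r0 t0 - vp r0 t0) - ε*t0 := fun p hp => hismax hp
    have hr0 : r0 ∈ Icc (0:ℝ) rb := hmem0.1
    have ht0 : t0 ∈ Icc (0:ℝ) tc := hmem0.2
    have hm : 0 < exp (-K*t0) * (vm r0 t0 - vp r0 t0) - ε*t0 :=
      lt_of_lt_of_le hpos (hmax (rx, tx) ⟨hrx, htx⟩)
    have hE : 0 < exp (-K*t0) := exp_pos _
    -- t0 > 0
    have ht0pos : 0 < t0 := by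
      rcases eq_or_lt_of_le ht0.1 with h | h
      · exfalso
        rw [← h] at hm
        simp only [mul_zero, neg_zero, exp_zero, one_mul, sub_zero] at hm
        have := hinit r0 hr0
        linarith
      · exact h
    -- r0 < rb
    have hr0lt : r0 < rb := by
      rcases eq_or_lt_of_le hr0.2 with h | h
      · exfalso
        rw [h] at hm
        have h1 : vm rb t0 - vp rb t0 ≤ 0 := by
          have := hbdry t0 ⟨ht0.1, le_trans ht0.2 htc.2.le⟩
          linarith
        nlinarith [mul_pos hε ht0pos]
      · exact h
    have ht0tb : t0 ∈ Ioo (0:ℝ) tb := ⟨ht0pos, lt_of_le_of_lt ht0.2 htc.2⟩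
    have ht0Icc : t0 ∈ Icc (0:ℝ) tb := ⟨ht0pos.le, ht0tb.2.le⟩
    have ht0Ioc : t0 ∈ Ioc (0:ℝ) tb := ⟨ht0pos, ht0tb.2.le⟩
    set δ0 : ℝ := vm r0 t0 - vp r0 t0 with hδ0def
    have hδ0 : 0 < δ0 := by nlinarith [mul_nonneg hε.le ht0pos.le]
    -- spatial slice max
    have hslice : ∀ ρ ∈ Icc (0:ℝ) rb, vm ρ t0 - vp ρ t0 ≤ δ0 := by
      intro ρ hρ
      have := hmax (ρ, t0) ⟨hρ, ht0⟩
      simp only at this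
      nlinarith
    -- time max
    have htime : ∀ t ∈ Ico (0:ℝ) t0,
        exp (-K*t) * (vm r0 t - vp r0 t) - ε*t ≤
        exp (-K*t0) * (vm r0 t0 - vp r0 t0) - ε*t0 := by
      intro t ht
      exact hmax (r0, t) ⟨hr0, ⟨ht.1, le_trans ht.2.le ht0.2⟩⟩
    rcases eq_or_lt_of_le hr0.1 with hr00 | hr0pos
    · -- max at r0 = 0 : Branch B
      have hr0z : r0 = 0 := hr00.symm
      rw [hr0z] at hδ0def htime
      have hIu : UniqueDiffOn ℝ (Icc (0:ℝ) rb) := uniqueDiffOn_Icc hrb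
      have hΞu : UniqueDiffOn ℝ (Icc (0:ℝ) rb ×ˢ Icc (0:ℝ) tb) :=
        hIu.prod (uniqueDiffOn_Icc htb)
      have h0I : (0:ℝ) ∈ Icc (0:ℝ) rb := ⟨le_rfl, hrb.le⟩
      -- r-slices at time t0
      have hA : ContDiffOn ℝ (⊤ : ℕ∞) (fun ρ => vm ρ t0) (Icc (0:ℝ) rb) :=
        hsm.comp ((contDiff_id.prodMk contDiff_const).contDiffOn) (fun ρ hρ => ⟨hρ, ht0Icc⟩)
      have hB : ContDiffOn ℝ (⊤ : ℕ∞) (fun ρ => vp ρ t0) (Icc (0:ℝ) rb) :=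
        hsp.comp ((contDiff_id.prodMk contDiff_const).contDiffOn) (fun ρ hρ => ⟨hρ, ht0Icc⟩)
      set dA : ℝ → ℝ := derivWithin (fun ρ => vm ρ t0) (Icc (0:ℝ) rb) with hdAdef
      set dB : ℝ → ℝ := derivWithin (fun ρ => vp ρ t0) (Icc (0:ℝ) rb) with hdBdef
      set ddA : ℝ → ℝ := derivWithin dA (Icc (0:ℝ) rb) with hddAdef
      set ddB : ℝ → ℝ := derivWithin dB (Icc (0:ℝ) rb) with hddBdef
      have hdAc : ContinuousOn dA (Icc (0:ℝ) rb) := hA.continuousOn_derivWithin hIu (by simp)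
      have hdBc : ContinuousOn dB (Icc (0:ℝ) rb) := hB.continuousOn_derivWithin hIu (by simp)
      have hA' : ContDiffOn ℝ (⊤ : ℕ∞) dA (Icc (0:ℝ) rb) := hA.derivWithin hIu (by simp)
      have hB' : ContDiffOn ℝ (⊤ : ℕ∞) dB (Icc (0:ℝ) rb) := hB.derivWithin hIu (by simp)
      have hddAc : ContinuousOn ddA (Icc (0:ℝ) rb) := hA'.continuousOn_derivWithin hIu (by simp)
      have hddBc : ContinuousOn ddB (Icc (0:ℝ) rb) := hB'.continuousOn_derivWithin hIu (by simp)
      have hAat : ∀ ρ ∈ Ioo (0:ℝ) rb, ContDiffAt ℝ (⊤ : ℕ∞) (fun ρ' => vm ρ' t0) ρ := by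
        intro ρ hρ
        exact (hsm.contDiffAt (prod_mem_nhds (Icc_mem_nhds hρ.1 hρ.2)
          (Icc_mem_nhds ht0tb.1 ht0tb.2))).comp ρ (contDiffAt_id.prodMk contDiffAt_const)
      have hBat : ∀ ρ ∈ Ioo (0:ℝ) rb, ContDiffAt ℝ (⊤ : ℕ∞) (fun ρ' => vp ρ' t0) ρ := by
        intro ρ hρ
        exact (hsp.contDiffAt (prod_mem_nhds (Icc_mem_nhds hρ.1 hρ.2)
          (Icc_mem_nhds ht0tb.1 ht0tb.2))).comp ρ (contDiffAt_id.prodMk contDiffAt_const)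
      have hdAeq : ∀ ρ ∈ Ioo (0:ℝ) rb, dA ρ = deriv (fun ρ' => vm ρ' t0) ρ := by
        intro ρ hρ
        exact derivWithin_of_mem_nhds (Icc_mem_nhds hρ.1 hρ.2)
      have hdBeq : ∀ ρ ∈ Ioo (0:ℝ) rb, dB ρ = deriv (fun ρ' => vp ρ' t0) ρ := by
        intro ρ hρ
        exact derivWithin_of_mem_nhds (Icc_mem_nhds hρ.1 hρ.2)
      have hdAev : ∀ ρ ∈ Ioo (0:ℝ) rb, dA =ᶠ[nhds ρ] deriv (fun ρ' => vm ρ' t0) := by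
        intro ρ hρ
        filter_upwards [isOpen_Ioo.mem_nhds hρ] with y hy
        exact hdAeq y hy
      have hdBev : ∀ ρ ∈ Ioo (0:ℝ) rb, dB =ᶠ[nhds ρ] deriv (fun ρ' => vp ρ' t0) := by
        intro ρ hρ
        filter_upwards [isOpen_Ioo.mem_nhds hρ] with y hy
        exact hdBeq y hy
      have hddAeq : ∀ ρ ∈ Ioo (0:ℝ) rb, ddA ρ = deriv (deriv (fun ρ' => vm ρ' t0)) ρ := by
        intro ρ hρ
        rw [hddAdef]
        rw [derivWithin_of_mem_nhds (Icc_mem_nhds hρ.1 hρ.2)]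
        exact (hdAev ρ hρ).deriv_eq
      have hddBeq : ∀ ρ ∈ Ioo (0:ℝ) rb, ddB ρ = deriv (deriv (fun ρ' => vp ρ' t0)) ρ := by
        intro ρ hρ
        rw [hddBdef]
        rw [derivWithin_of_mem_nhds (Icc_mem_nhds hρ.1 hρ.2)]
        exact (hdBev ρ hρ).deriv_eq
      -- time derivative functions
      set Gm : ℝ → ℝ := fun ρ =>
        (fderivWithin ℝ (fun p : ℝ × ℝ => vm p.1 p.2) (Icc (0:ℝ) rb ×ˢ Icc (0:ℝ) tb) (ρ, t0))
          (0, 1) with hGmdef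
      set Gp : ℝ → ℝ := fun ρ =>
        (fderivWithin ℝ (fun p : ℝ × ℝ => vp p.1 p.2) (Icc (0:ℝ) rb ×ˢ Icc (0:ℝ) tb) (ρ, t0))
          (0, 1) with hGpdef
      have hGmc : ContinuousOn Gm (Icc (0:ℝ) rb) := by
        refine ContinuousOn.clm_apply ?_ continuousOn_const
        exact (hsm.continuousOn_fderivWithin hΞu (by simp)).comp
          (Continuous.continuousOn (continuous_id.prodMk continuous_const))
          (fun ρ hρ => ⟨hρ, ht0Icc⟩)
      have hGpc : ContinuousOn Gp (Icc (0:ℝ) rb) := by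
        refine ContinuousOn.clm_apply ?_ continuousOn_const
        exact (hsp.continuousOn_fderivWithin hΞu (by simp)).comp
          (Continuous.continuousOn (continuous_id.prodMk continuous_const))
          (fun ρ hρ => ⟨hρ, ht0Icc⟩)
      have hGmeq : ∀ ρ ∈ Ioo (0:ℝ) rb, Gm ρ = deriv (fun s => vm ρ s) t0 := by
        intro ρ hρ
        have hmem : (Icc (0:ℝ) rb ×ˢ Icc (0:ℝ) tb) ∈ nhds (ρ, t0) :=
          prod_mem_nhds (Icc_mem_nhds hρ.1 hρ.2) (Icc_mem_nhds ht0tb.1 ht0tb.2)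
        have hd : HasDerivAt (fun s => vm ρ s)
            ((fderiv ℝ (fun p : ℝ × ℝ => vm p.1 p.2) (ρ, t0)) (0, 1)) t0 := by
          have hF : HasFDerivAt (fun p : ℝ × ℝ => vm p.1 p.2)
              (fderiv ℝ (fun p : ℝ × ℝ => vm p.1 p.2) (ρ, t0)) (ρ, t0) :=
            (((hsm.contDiffAt hmem)).differentiableAt (by simp)).hasFDerivAt
          have hc : HasDerivAt (fun s : ℝ => ((ρ : ℝ), s)) ((0:ℝ), (1:ℝ)) t0 :=
            (hasDerivAt_const t0 ρ).prodMk (hasDerivAt_id t0)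
          exact hF.comp_hasDerivAt t0 hc
        rw [hGmdef]
        simp only
        rw [fderivWithin_of_mem_nhds hmem]
        exact (hd.deriv).symm
      have hGpeq : ∀ ρ ∈ Ioo (0:ℝ) rb, Gp ρ = deriv (fun s => vp ρ s) t0 := by
        intro ρ hρ
        have hmem : (Icc (0:ℝ) rb ×ˢ Icc (0:ℝ) tb) ∈ nhds (ρ, t0) :=
          prod_mem_nhds (Icc_mem_nhds hρ.1 hρ.2) (Icc_mem_nhds ht0tb.1 ht0tb.2)
        have hd : HasDerivAt (fun s => vp ρ s)
            ((fderiv ℝ (fun p : ℝ × ℝ => vp p.1 p.2) (ρ, t0)) (0, 1)) t0 := by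
          have hF : HasFDerivAt (fun p : ℝ × ℝ => vp p.1 p.2)
              (fderiv ℝ (fun p : ℝ × ℝ => vp p.1 p.2) (ρ, t0)) (ρ, t0) :=
            (((hsp.contDiffAt hmem)).differentiableAt (by simp)).hasFDerivAt
          have hc : HasDerivAt (fun s : ℝ => ((ρ : ℝ), s)) ((0:ℝ), (1:ℝ)) t0 :=
            (hasDerivAt_const t0 ρ).prodMk (hasDerivAt_id t0)
          exact hF.comp_hasDerivAt t0 hc
        rw [hGpdef]
        simp only
        rw [fderivWithin_of_mem_nhds hmem]
        exact (hd.deriv).symm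
      have hGm0 : HasDerivWithinAt (fun s => vm 0 s) (Gm 0) (Icc (0:ℝ) tb) t0 := by
        have hdw : HasFDerivWithinAt (fun p : ℝ × ℝ => vm p.1 p.2)
            (fderivWithin ℝ (fun p : ℝ × ℝ => vm p.1 p.2)
              (Icc (0:ℝ) rb ×ˢ Icc (0:ℝ) tb) (0, t0))
            (Icc (0:ℝ) rb ×ˢ Icc (0:ℝ) tb) (0, t0) :=
          ((hsm.differentiableOn (by simp)) (0, t0) ⟨h0I, ht0Icc⟩).hasFDerivWithinAt
        have hc : HasDerivWithinAt (fun s : ℝ => ((0:ℝ), s)) ((0:ℝ), (1:ℝ))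
            (Icc (0:ℝ) tb) t0 :=
          ((hasDerivAt_const t0 (0:ℝ)).prodMk (hasDerivAt_id t0)).hasDerivWithinAt
        exact hdw.comp_hasDerivWithinAt t0 hc (fun s hs => ⟨h0I, hs⟩)
      have hGp0 : HasDerivWithinAt (fun s => vp 0 s) (Gp 0) (Icc (0:ℝ) tb) t0 := by
        have hdw : HasFDerivWithinAt (fun p : ℝ × ℝ => vp p.1 p.2)
            (fderivWithin ℝ (fun p : ℝ × ℝ => vp p.1 p.2)
              (Icc (0:ℝ) rb ×ˢ Icc (0:ℝ) tb) (0, t0))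
            (Icc (0:ℝ) rb ×ˢ Icc (0:ℝ) tb) (0, t0) :=
          ((hsp.differentiableOn (by simp)) (0, t0) ⟨h0I, ht0Icc⟩).hasFDerivWithinAt
        have hc : HasDerivWithinAt (fun s : ℝ => ((0:ℝ), s)) ((0:ℝ), (1:ℝ))
            (Icc (0:ℝ) tb) t0 :=
          ((hasDerivAt_const t0 (0:ℝ)).prodMk (hasDerivAt_id t0)).hasDerivWithinAt
        exact hdw.comp_hasDerivWithinAt t0 hc (fun s hs => ⟨h0I, hs⟩)
      -- time derivative inequality at r = 0
      have hexp : HasDerivAt (fun t : ℝ => exp (-K*t)) (exp (-K*t0) * (-K)) t0 := by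
        have h1 : HasDerivAt (fun t : ℝ => -K*t) (-K) t0 := by
          simpa using (hasDerivAt_id t0).const_mul (-K)
        exact h1.exp
      have hDm0 : HasDerivAt (fun s => vm 0 s) (Gm 0) t0 :=
        hGm0.hasDerivAt (Icc_mem_nhds ht0tb.1 ht0tb.2)
      have hDp0 : HasDerivAt (fun s => vp 0 s) (Gp 0) t0 :=
        hGp0.hasDerivAt (Icc_mem_nhds ht0tb.1 ht0tb.2)
      have hτ : HasDerivAt (fun t => exp (-K*t) * (vm 0 t - vp 0 t) - ε*t)
          (exp (-K*t0) * (-K) * (vm 0 t0 - vp 0 t0)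
            + exp (-K*t0) * (Gm 0 - Gp 0) - ε) t0 := by
        have h2 := (hexp.mul (hDm0.sub hDp0)).sub ((hasDerivAt_id t0).const_mul ε)
        exact h2.congr_deriv (by simp only [Pi.sub_apply]; ring)
      have htd : 0 ≤ exp (-K*t0) * (-K) * (vm 0 t0 - vp 0 t0)
          + exp (-K*t0) * (Gm 0 - Gp 0) - ε := deriv_nonneg_right hτ ht0pos htime
      rw [← hδ0def] at htd
      -- the filter at 0+
      set l : Filter ℝ := nhdsWithin 0 (Ioc (0:ℝ) rb) with hldef
      have hlIoi : l = nhdsWithin 0 (Ioi (0:ℝ)) := nhdsWithin_Ioc_eq_nhdsGT hrb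
      haveI hlne : l.NeBot := by rw [hlIoi]; infer_instance
      have hlI : l ≤ nhdsWithin 0 (Icc (0:ℝ) rb) := nhdsWithin_mono 0 Ioc_subset_Icc_self
      have hl0 : l ≤ nhds (0:ℝ) := le_trans hlI nhdsWithin_le_nhds
      have tendI : ∀ {F : ℝ → ℝ}, ContinuousOn F (Icc (0:ℝ) rb) → Tendsto F l (nhds (F 0)) :=
        fun hF => (hF 0 h0I).mono_left hlI
      have tA : Tendsto (fun ρ => vm ρ t0) l (nhds (vm 0 t0)) := tendI hA.continuousOn
      have tB : Tendsto (fun ρ => vp ρ t0) l (nhds (vp 0 t0)) := tendI hB.continuousOn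
      have tdA : Tendsto dA l (nhds (dA 0)) := tendI hdAc
      have tdB : Tendsto dB l (nhds (dB 0)) := tendI hdBc
      have tddA : Tendsto ddA l (nhds (ddA 0)) := tendI hddAc
      have tddB : Tendsto ddB l (nhds (ddB 0)) := tendI hddBc
      have tGm : Tendsto Gm l (nhds (Gm 0)) := tendI hGmc
      have tGp : Tendsto Gp l (nhds (Gp 0)) := tendI hGpc
      have tid : Tendsto (fun ρ : ℝ => ρ) l (nhds 0) := hl0
      have hevIoo : ∀ᶠ ρ in l, ρ ∈ Ioo (0:ℝ) rb := by
        rw [hlIoi]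
        exact Ioo_mem_nhdsGT_of_mem ⟨le_rfl, hrb⟩
      have tδ : Tendsto (fun ρ => vm ρ t0 - vp ρ t0) l (nhds δ0) := by
        rw [hδ0def]
        exact tA.sub tB
      have hevδ : ∀ᶠ ρ in l, 0 < vm ρ t0 - vp ρ t0 := tδ.eventually (eventually_gt_nhds hδ0)
      have hρ2top : Tendsto (fun ρ : ℝ => (ρ^2)⁻¹) l atTop := by
        refine tendsto_inv_nhdsGT_zero.comp ?_
        rw [tendsto_nhdsWithin_iff]
        constructor
        · have := (tid.mul tid)
          simp only [mul_zero] at this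
          refine Tendsto.congr (fun ρ => by ring) this
        · filter_upwards [hevIoo] with ρ hρ
          exact pow_pos hρ.1 2
      have hρinvtop : Tendsto (fun ρ : ℝ => ρ⁻¹) l atTop := by
        rw [hlIoi]
        exact tendsto_inv_nhdsGT_zero
      -- boundary slope: γ ≤ 0
      have hcw : HasDerivWithinAt (fun ρ => vm ρ t0 - vp ρ t0) (dA 0 - dB 0)
          (Icc (0:ℝ) rb) 0 :=
        ((hA.differentiableOn (by simp) 0 h0I).hasDerivWithinAt).sub
          ((hB.differentiableOn (by simp) 0 h0I).hasDerivWithinAt)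
      have hγ : dA 0 - dB 0 ≤ 0 := by
        refine derivWithin_nonpos_left hrb hcw ?_
        intro ρ hρ
        have h1 := hslice ρ hρ
        rw [hδ0def] at h1
        simpa using h1
      have hn1 : (1:ℝ) ≤ (n:ℝ) - 1 := by
        have : (2:ℝ) ≤ (n:ℝ) := by exact_mod_cast hn
        linarith
      have tter : Tendsto (fun ρ => -(1/2)*(dA ρ - dB ρ)*(dA ρ + dB ρ)) l
          (nhds (-(1/2)*(dA 0 - dB 0)*(dA 0 + dB 0))) :=
        ((tendsto_const_nhds.mul (tdA.sub tdB)).mul (tdA.add tdB))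
      have hevlow : ∀ᶠ ρ in l, Gm 0 - Gp 0 - 1 ≤ Gm ρ - Gp ρ :=
        (tGm.sub tGp).eventually (eventually_ge_nhds (by linarith))
      have hEKδ : exp (-K*t0) * ((2*(n:ℝ)+1)*C₀*δ0)
          = exp (-K*t0)*K*δ0 - exp (-K*t0)*δ0 := by rw [hKdef]; ring
      rcases hC with hCm | hCp
      · -- C-bounds hold for vm
        have hkey : ∀ᶠ ρ in l, Gm ρ - Gp ρ ≤
            ((2*(n:ℝ)+1)*C₀*(vm ρ t0 - vp ρ t0) + (vp ρ t0)*(ddA ρ - ddB ρ))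
              + ((dA ρ - dB ρ)*(((n:ℝ)-1-vp ρ t0)/ρ - (1/2)*(dA ρ + dB ρ))
                - 2*((n:ℝ)-1)*(vm ρ t0 - vp ρ t0)*(vp ρ t0)/ρ^2) := by
          filter_upwards [hevIoo, hevδ] with ρ hρ hδρ
          obtain ⟨h1, h2, h3⟩ := hCm ρ ⟨hρ.1, hρ.2.le⟩ t0 ht0Icc
          have hFm := hsub ρ hρ t0 ht0Ioc
          have hFp := hsup ρ hρ t0 ht0Ioc
          rw [Fop_eq_Fval] at hFm hFp
          have hest := est_vm n hn (pb := deriv (fun ρ' => vp ρ' t0) ρ)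
            (qb := deriv (deriv (fun ρ' => vp ρ' t0)) ρ) hρ.1 hδρ
            (le_trans h1 hCC₀) (le_trans h2 hCC₀) (le_trans h3 hCC₀)
          rw [hGmeq ρ hρ, hGpeq ρ hρ, hdAeq ρ hρ, hdBeq ρ hρ, hddAeq ρ hρ, hddBeq ρ hρ]
          linarith
        have tR2 : Tendsto (fun ρ => (2*(n:ℝ)+1)*C₀*(vm ρ t0 - vp ρ t0)
            + (vp ρ t0)*(ddA ρ - ddB ρ)) l
            (nhds ((2*(n:ℝ)+1)*C₀*δ0 + (vp 0 t0)*(ddA 0 - ddB 0))) :=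
          (tendsto_const_nhds.mul tδ).add (tB.mul (tddA.sub tddB))
        rcases eq_or_lt_of_le (hnp 0 h0I t0 ht0Icc) with hb0 | hb0
        · -- vp(0,t0) = 0
          have hkey2 : ∀ᶠ ρ in l, Gm ρ - Gp ρ ≤
              ((2*(n:ℝ)+1)*C₀*(vm ρ t0 - vp ρ t0) + (vp ρ t0)*(ddA ρ - ddB ρ))
                + (dA ρ - dB ρ)*(((n:ℝ)-1-vp ρ t0)/ρ - (1/2)*(dA ρ + dB ρ)) := by
            filter_upwards [hkey, hevIoo, hevδ] with ρ hk hρ hδρ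
            have hbnn : 0 ≤ vp ρ t0 := hnp ρ ⟨hρ.1.le, hρ.2.le⟩ t0 ht0Icc
            have hnn : 0 ≤ 2*((n:ℝ)-1)*(vm ρ t0 - vp ρ t0)*(vp ρ t0)/ρ^2 := by
              apply div_nonneg _ (sq_nonneg ρ)
              have h2 : (0:ℝ) ≤ 2*((n:ℝ)-1) := by linarith
              exact mul_nonneg (mul_nonneg h2 hδρ.le) hbnn
            linarith
          rcases hγ.lt_or_eq with hγlt | hγeq
          · -- γ < 0 : singular negative drift
            have hsplit : ∀ᶠ ρ in l,
                (dA ρ - dB ρ)*(((n:ℝ)-1-vp ρ t0)/ρ - (1/2)*(dA ρ + dB ρ))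
                = ρ⁻¹*(((n:ℝ)-1-vp ρ t0)*(dA ρ - dB ρ))
                  + (-(1/2)*(dA ρ - dB ρ)*(dA ρ + dB ρ)) := by
              filter_upwards [hevIoo] with ρ hρ
              have : ρ ≠ 0 := ne_of_gt hρ.1
              field_simp
              ring
            have tfac : Tendsto (fun ρ => ((n:ℝ)-1-vp ρ t0)*(dA ρ - dB ρ)) l
                (nhds (((n:ℝ)-1-vp 0 t0)*(dA 0 - dB 0))) :=
              ((tendsto_const_nhds.sub tB).mul (tdA.sub tdB))
            have hneg : ((n:ℝ)-1-vp 0 t0)*(dA 0 - dB 0) < 0 := by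
              rw [← hb0]
              have h1 : (0:ℝ) < (n:ℝ)-1-0 := by linarith
              nlinarith
            have tS : Tendsto (fun ρ => ρ⁻¹*(((n:ℝ)-1-vp ρ t0)*(dA ρ - dB ρ))) l atBot :=
              Tendsto.atTop_mul_neg hneg hρinvtop tfac
            have tFull : Tendsto (fun ρ =>
                (ρ⁻¹*(((n:ℝ)-1-vp ρ t0)*(dA ρ - dB ρ))
                  + (-(1/2)*(dA ρ - dB ρ)*(dA ρ + dB ρ)))
                + ((2*(n:ℝ)+1)*C₀*(vm ρ t0 - vp ρ t0) + (vp ρ t0)*(ddA ρ - ddB ρ))) l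
                atBot := (tS.atBot_add tter).atBot_add tR2
            have hevB := tFull.eventually (eventually_le_atBot (Gm 0 - Gp 0 - 2))
            obtain ⟨ρ, h1, h2, h3, h4⟩ := (hkey2.and (hsplit.and (hevB.and hevlow))).exists
            rw [h2] at h1
            linarith
          · -- γ = 0 : boundary second-order test
            have hw : HasDerivWithinAt (fun ρ => dA ρ - dB ρ) (ddA 0 - ddB 0)
                (Icc (0:ℝ) rb) 0 :=
              ((hA'.differentiableOn (by simp) 0 h0I).hasDerivWithinAt).sub
                ((hB'.differentiableOn (by simp) 0 h0I).hasDerivWithinAt)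
            have tslope : Tendsto (fun ρ => (dA ρ - dB ρ)/ρ) l (nhds (ddA 0 - ddB 0)) := by
              rw [hasDerivWithinAt_iff_tendsto_slope, Icc_diff_left] at hw
              refine Tendsto.congr' ?_ hw
              filter_upwards [hevIoo] with ρ hρ
              rw [slope_def_field]
              simp [hγeq]
            have hz0 : ddA 0 - ddB 0 ≤ 0 := by
              refine second_deriv_test_left (c := fun ρ => vm ρ t0 - vp ρ t0)
                (w := fun ρ => dA ρ - dB ρ) (z := fun ρ => ddA ρ - ddB ρ) hrb
                (hA.continuousOn.sub hB.continuousOn) (hdAc.sub hdBc) ?_ ?_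
                ((hddAc.sub hddBc) 0 h0I) hγeq ?_
              · intro ρ hρ
                show deriv (fun ρ' => vm ρ' t0 - vp ρ' t0) ρ = dA ρ - dB ρ
                rw [deriv_fun_sub ((hAat ρ hρ).differentiableAt (by simp))
                  ((hBat ρ hρ).differentiableAt (by simp)), hdAeq ρ hρ, hdBeq ρ hρ]
              · intro ρ hρ
                show deriv (fun ρ' => dA ρ' - dB ρ') ρ = ddA ρ - ddB ρ
                have hdAdiff : DifferentiableAt ℝ dA ρ := by
                  rw [(hdAev ρ hρ).differentiableAt_iff]
                  exact deriv_differentiableAt ((hAat ρ hρ).of_le (WithTop.coe_le_coe.mpr le_top))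
                have hdBdiff : DifferentiableAt ℝ dB ρ := by
                  rw [(hdBev ρ hρ).differentiableAt_iff]
                  exact deriv_differentiableAt ((hBat ρ hρ).of_le (WithTop.coe_le_coe.mpr le_top))
                rw [deriv_fun_sub hdAdiff hdBdiff, (hdAev ρ hρ).deriv_eq, (hdBev ρ hρ).deriv_eq,
                  ← hddAeq ρ hρ, ← hddBeq ρ hρ]
              · intro ρ hρ
                have h1 := hslice ρ hρ
                rw [hδ0def] at h1
                simpa using h1
            have hsplit2 : ∀ᶠ ρ in l,
                (dA ρ - dB ρ)*(((n:ℝ)-1-vp ρ t0)/ρ - (1/2)*(dA ρ + dB ρ))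
                = ((dA ρ - dB ρ)/ρ)*((n:ℝ)-1-vp ρ t0)
                  + (-(1/2)*(dA ρ - dB ρ)*(dA ρ + dB ρ)) := by
              filter_upwards [hevIoo] with ρ hρ
              have hρ0 : ρ ≠ 0 := ne_of_gt hρ.1
              field_simp
              ring
            have tk : Tendsto (fun ρ => ((dA ρ - dB ρ)/ρ)*((n:ℝ)-1-vp ρ t0)
                + (-(1/2)*(dA ρ - dB ρ)*(dA ρ + dB ρ))) l
                (nhds ((ddA 0 - ddB 0)*((n:ℝ)-1-vp 0 t0)
                  + (-(1/2)*(dA 0 - dB 0)*(dA 0 + dB 0)))) :=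
              (tslope.mul (tendsto_const_nhds.sub tB)).add tter
            have hevle : (fun ρ => Gm ρ - Gp ρ) ≤ᶠ[l] (fun ρ =>
                ((2*(n:ℝ)+1)*C₀*(vm ρ t0 - vp ρ t0) + (vp ρ t0)*(ddA ρ - ddB ρ))
                + (((dA ρ - dB ρ)/ρ)*((n:ℝ)-1-vp ρ t0)
                  + (-(1/2)*(dA ρ - dB ρ)*(dA ρ + dB ρ)))) := by
              filter_upwards [hkey2, hsplit2] with ρ h1 h2
              rw [← h2]
              exact h1
            have hL : Gm 0 - Gp 0 ≤ ((2*(n:ℝ)+1)*C₀*δ0 + (vp 0 t0)*(ddA 0 - ddB 0))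
                + ((ddA 0 - ddB 0)*((n:ℝ)-1-vp 0 t0)
                  + (-(1/2)*(dA 0 - dB 0)*(dA 0 + dB 0))) :=
              le_of_tendsto_of_tendsto (tGm.sub tGp) (tR2.add tk) hevle
            have hb0' : vp 0 t0 = 0 := hb0.symm
            have hM : (ddA 0 - ddB 0)*((n:ℝ)-1-vp 0 t0) ≤ 0 := by
              rw [hb0']
              nlinarith
            have e1 : (vp 0 t0)*(ddA 0 - ddB 0) = 0 := by rw [hb0']; ring
            have e2 : -(1/2)*(dA 0 - dB 0)*(dA 0 + dB 0) = 0 := by rw [hγeq]; ring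
            rw [e1, e2] at hL
            have h1 : Gm 0 - Gp 0 ≤ (2*(n:ℝ)+1)*C₀*δ0 := by linarith
            have hfin := mul_le_mul_of_nonneg_left h1 hE.le
            linarith [mul_pos hE hδ0, hε]
        · -- vp(0,t0) > 0 : strongly negative zeroth-order term
          have hsplit : ∀ᶠ ρ in l,
              ((dA ρ - dB ρ)*(((n:ℝ)-1-vp ρ t0)/ρ - (1/2)*(dA ρ + dB ρ))
                - 2*((n:ℝ)-1)*(vm ρ t0 - vp ρ t0)*(vp ρ t0)/ρ^2)
              = ((ρ^2)⁻¹*(ρ*(((n:ℝ)-1-vp ρ t0)*(dA ρ - dB ρ))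
                  - 2*((n:ℝ)-1)*((vm ρ t0 - vp ρ t0)*(vp ρ t0)))
                + (-(1/2)*(dA ρ - dB ρ)*(dA ρ + dB ρ))) := by
            filter_upwards [hevIoo] with ρ hρ
            have hρ0 : ρ ≠ 0 := ne_of_gt hρ.1
            field_simp
            ring
          have tinner : Tendsto (fun ρ => ρ*(((n:ℝ)-1-vp ρ t0)*(dA ρ - dB ρ))
              - 2*((n:ℝ)-1)*((vm ρ t0 - vp ρ t0)*(vp ρ t0))) l
              (nhds (0*(((n:ℝ)-1-vp 0 t0)*(dA 0 - dB 0))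
                - 2*((n:ℝ)-1)*(δ0*(vp 0 t0)))) :=
            (tid.mul ((tendsto_const_nhds.sub tB).mul (tdA.sub tdB))).sub
              (tendsto_const_nhds.mul (tδ.mul tB))
          have hneg : 0*(((n:ℝ)-1-vp 0 t0)*(dA 0 - dB 0))
              - 2*((n:ℝ)-1)*(δ0*(vp 0 t0)) < 0 := by
            nlinarith [mul_pos hδ0 hb0, hn1]
          have tS := Tendsto.atTop_mul_neg hneg hρ2top tinner
          have tFull : Tendsto (fun ρ =>
              (((ρ^2)⁻¹*(ρ*(((n:ℝ)-1-vp ρ t0)*(dA ρ - dB ρ))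
                  - 2*((n:ℝ)-1)*((vm ρ t0 - vp ρ t0)*(vp ρ t0)))
                + (-(1/2)*(dA ρ - dB ρ)*(dA ρ + dB ρ))))
              + ((2*(n:ℝ)+1)*C₀*(vm ρ t0 - vp ρ t0) + (vp ρ t0)*(ddA ρ - ddB ρ))) l
              atBot := (tS.atBot_add tter).atBot_add tR2
          have hevB := tFull.eventually (eventually_le_atBot (Gm 0 - Gp 0 - 2))
          obtain ⟨ρ, h1, h2, h3, h4⟩ := (hkey.and (hsplit.and (hevB.and hevlow))).exists
          rw [h2] at h1
          linarith
      · -- C-bounds hold for vp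
        have haa : 0 < vm 0 t0 := by
          have h5 := hnp 0 h0I t0 ht0Icc
          have h6 : δ0 = vm 0 t0 - vp 0 t0 := hδ0def
          linarith
        have hkey : ∀ᶠ ρ in l, Gm ρ - Gp ρ ≤
            ((2*(n:ℝ)+1)*C₀*(vm ρ t0 - vp ρ t0) + (vm ρ t0)*(ddA ρ - ddB ρ))
              + ((dA ρ - dB ρ)*(((n:ℝ)-1-vm ρ t0)/ρ - (1/2)*(dA ρ + dB ρ))
                - 2*((n:ℝ)-1)*(vm ρ t0 - vp ρ t0)*(vm ρ t0)/ρ^2) := by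
          filter_upwards [hevIoo, hevδ] with ρ hρ hδρ
          obtain ⟨h1, h2, h3⟩ := hCp ρ ⟨hρ.1, hρ.2.le⟩ t0 ht0Icc
          have hFm := hsub ρ hρ t0 ht0Ioc
          have hFp := hsup ρ hρ t0 ht0Ioc
          rw [Fop_eq_Fval] at hFm hFp
          have hest := est_vp n hn (pa := deriv (fun ρ' => vm ρ' t0) ρ)
            (qa := deriv (deriv (fun ρ' => vm ρ' t0)) ρ) hρ.1 hδρ
            (le_trans h1 hCC₀) (le_trans h2 hCC₀) (le_trans h3 hCC₀)
          rw [hGmeq ρ hρ, hGpeq ρ hρ, hdAeq ρ hρ, hdBeq ρ hρ, hddAeq ρ hρ, hddBeq ρ hρ]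
          linarith
        have tR2' : Tendsto (fun ρ => (2*(n:ℝ)+1)*C₀*(vm ρ t0 - vp ρ t0)
            + (vm ρ t0)*(ddA ρ - ddB ρ)) l
            (nhds ((2*(n:ℝ)+1)*C₀*δ0 + (vm 0 t0)*(ddA 0 - ddB 0))) :=
          (tendsto_const_nhds.mul tδ).add (tA.mul (tddA.sub tddB))
        have hsplit : ∀ᶠ ρ in l,
            ((dA ρ - dB ρ)*(((n:ℝ)-1-vm ρ t0)/ρ - (1/2)*(dA ρ + dB ρ))
              - 2*((n:ℝ)-1)*(vm ρ t0 - vp ρ t0)*(vm ρ t0)/ρ^2)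
            = ((ρ^2)⁻¹*(ρ*(((n:ℝ)-1-vm ρ t0)*(dA ρ - dB ρ))
                - 2*((n:ℝ)-1)*((vm ρ t0 - vp ρ t0)*(vm ρ t0)))
              + (-(1/2)*(dA ρ - dB ρ)*(dA ρ + dB ρ))) := by
          filter_upwards [hevIoo] with ρ hρ
          have hρ0 : ρ ≠ 0 := ne_of_gt hρ.1
          field_simp
          ring
        have tinner : Tendsto (fun ρ => ρ*(((n:ℝ)-1-vm ρ t0)*(dA ρ - dB ρ))
            - 2*((n:ℝ)-1)*((vm ρ t0 - vp ρ t0)*(vm ρ t0))) l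
            (nhds (0*(((n:ℝ)-1-vm 0 t0)*(dA 0 - dB 0))
              - 2*((n:ℝ)-1)*(δ0*(vm 0 t0)))) :=
          (tid.mul ((tendsto_const_nhds.sub tA).mul (tdA.sub tdB))).sub
            (tendsto_const_nhds.mul (tδ.mul tA))
        have hneg : 0*(((n:ℝ)-1-vm 0 t0)*(dA 0 - dB 0))
            - 2*((n:ℝ)-1)*(δ0*(vm 0 t0)) < 0 := by
          nlinarith [mul_pos hδ0 haa, hn1]
        have tS := Tendsto.atTop_mul_neg hneg hρ2top tinner
        have tFull : Tendsto (fun ρ =>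
            (((ρ^2)⁻¹*(ρ*(((n:ℝ)-1-vm ρ t0)*(dA ρ - dB ρ))
                - 2*((n:ℝ)-1)*((vm ρ t0 - vp ρ t0)*(vm ρ t0)))
              + (-(1/2)*(dA ρ - dB ρ)*(dA ρ + dB ρ))))
            + ((2*(n:ℝ)+1)*C₀*(vm ρ t0 - vp ρ t0) + (vm ρ t0)*(ddA ρ - ddB ρ))) l
            atBot := (tS.atBot_add tter).atBot_add tR2'
        have hevB := tFull.eventually (eventually_le_atBot (Gm 0 - Gp 0 - 2))
        obtain ⟨ρ, h1, h2, h3, h4⟩ := (hkey.and (hsplit.and (hevB.and hevlow))).exists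
        rw [h2] at h1
        linarith
    · -- interior max : Branch A
      have hr0Ioo : r0 ∈ Ioo (0:ℝ) rb := ⟨hr0pos, hr0lt⟩
      have hmemΞ : (Icc (0:ℝ) rb ×ˢ Icc (0:ℝ) tb) ∈ nhds (r0, t0) :=
        prod_mem_nhds (Icc_mem_nhds hr0pos hr0lt) (Icc_mem_nhds ht0tb.1 ht0tb.2)
      have hVmAt : ContDiffAt ℝ (⊤ : ℕ∞) (fun p : ℝ × ℝ => vm p.1 p.2) (r0, t0) :=
        hsm.contDiffAt hmemΞ
      have hVpAt : ContDiffAt ℝ (⊤ : ℕ∞) (fun p : ℝ × ℝ => vp p.1 p.2) (r0, t0) :=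
        hsp.contDiffAt hmemΞ
      -- r-slices
      have hAat : ContDiffAt ℝ (⊤ : ℕ∞) (fun ρ => vm ρ t0) r0 :=
        hVmAt.comp r0 (contDiffAt_id.prodMk contDiffAt_const)
      have hBat : ContDiffAt ℝ (⊤ : ℕ∞) (fun ρ => vp ρ t0) r0 :=
        hVpAt.comp r0 (contDiffAt_id.prodMk contDiffAt_const)
      -- t-slices
      have hAtm : ContDiffAt ℝ (⊤ : ℕ∞) (fun s => vm r0 s) t0 :=
        hVmAt.comp t0 (contDiffAt_const.prodMk contDiffAt_id)
      have hAtp : ContDiffAt ℝ (⊤ : ℕ∞) (fun s => vp r0 s) t0 :=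
        hVpAt.comp t0 (contDiffAt_const.prodMk contDiffAt_id)
      -- local max of difference slice in r
      have hlocmax : IsLocalMax (fun ρ => vm ρ t0 - vp ρ t0) r0 := by
        filter_upwards [Icc_mem_nhds hr0pos hr0lt] with ρ hρ
        exact hslice ρ hρ
      -- first derivative zero
      have hdiffA : DifferentiableAt ℝ (fun ρ => vm ρ t0) r0 := hAat.differentiableAt (by simp)
      have hdiffB : DifferentiableAt ℝ (fun ρ => vp ρ t0) r0 := hBat.differentiableAt (by simp)
      have hwr : deriv (fun ρ => vm ρ t0) r0 = deriv (fun ρ => vp ρ t0) r0 := by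
        have h0 := hlocmax.deriv_eq_zero
        rw [deriv_fun_sub hdiffA hdiffB] at h0
        linarith
      -- second derivative
      have hevent : ∀ᶠ ρ in nhds r0, ContDiffAt ℝ 1 (fun ρ => vm ρ t0) ρ ∧
          ContDiffAt ℝ 1 (fun ρ => vp ρ t0) ρ :=
        ((hAat.of_le (by simp)).eventually (by simp)).and
          ((hBat.of_le (by simp)).eventually (by simp))
      have heq : (deriv (fun ρ => vm ρ t0 - vp ρ t0)) =ᶠ[nhds r0]
          (fun ρ => deriv (fun ρ' => vm ρ' t0) ρ - deriv (fun ρ' => vp ρ' t0) ρ) := by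
        filter_upwards [hevent] with ρ hρ
        exact deriv_sub (hρ.1.differentiableAt one_ne_zero) (hρ.2.differentiableAt one_ne_zero)
      have hq2 : deriv (deriv (fun ρ => vm ρ t0 - vp ρ t0)) r0 ≤ 0 :=
        second_deriv_test ((hAat.sub hBat).of_le (WithTop.coe_le_coe.mpr le_top)) hlocmax
      have hq3 : deriv (deriv (fun ρ => vm ρ t0)) r0 - deriv (deriv (fun ρ => vp ρ t0)) r0 ≤ 0 := by
        rw [heq.deriv_eq] at hq2
        rwa [deriv_fun_sub (deriv_differentiableAt (hAat.of_le (WithTop.coe_le_coe.mpr le_top)))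
          (deriv_differentiableAt (hBat.of_le (WithTop.coe_le_coe.mpr le_top)))] at hq2
      -- PDE inequalities
      have hFm := hsub r0 hr0Ioo t0 ht0Ioc
      have hFp := hsup r0 hr0Ioo t0 ht0Ioc
      rw [Fop_eq_Fval] at hFm hFp
      -- the estimate
      have hest : Fval n (vm r0 t0) (deriv (fun ρ => vm ρ t0) r0)
            (deriv (deriv (fun ρ => vm ρ t0)) r0) r0
          - Fval n (vp r0 t0) (deriv (fun ρ => vp ρ t0) r0)
            (deriv (deriv (fun ρ => vp ρ t0)) r0) r0 ≤ (2*(n:ℝ)+1)*C₀*δ0 := by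
        refine est_interior n hn hr0pos (hnm r0 hr0 t0 ht0Icc) (hnp r0 hr0 t0 ht0Icc) hδ0 hwr hq3 ?_
        have hr0Ioc : r0 ∈ Ioc (0:ℝ) rb := ⟨hr0pos, hr0.2⟩
        rcases hC with h | h
        · obtain ⟨h1, h2, h3⟩ := h r0 hr0Ioc t0 ht0Icc
          exact Or.inl ⟨le_trans h1 hCC₀, le_trans h2 hCC₀, le_trans h3 hCC₀⟩
        · obtain ⟨h1, h2, h3⟩ := h r0 hr0Ioc t0 ht0Icc
          exact Or.inr ⟨le_trans h1 hCC₀, le_trans h2 hCC₀, le_trans h3 hCC₀⟩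
      -- time derivative
      have hDm : HasDerivAt (fun s => vm r0 s) (deriv (fun s => vm r0 s) t0) t0 :=
        (hAtm.differentiableAt (by simp)).hasDerivAt
      have hDp : HasDerivAt (fun s => vp r0 s) (deriv (fun s => vp r0 s) t0) t0 :=
        (hAtp.differentiableAt (by simp)).hasDerivAt
      have hexp : HasDerivAt (fun t : ℝ => exp (-K*t)) (exp (-K*t0) * (-K)) t0 := by
        have h1 : HasDerivAt (fun t : ℝ => -K*t) (-K) t0 := by
          simpa using (hasDerivAt_id t0).const_mul (-K)
        exact h1.exp
      have hτ : HasDerivAt (fun t => exp (-K*t) * (vm r0 t - vp r0 t) - ε*t)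
          (exp (-K*t0) * (-K) * (vm r0 t0 - vp r0 t0)
            + exp (-K*t0) * (deriv (fun s => vm r0 s) t0 - deriv (fun s => vp r0 s) t0)
            - ε) t0 := by
        have h2 := (hexp.mul (hDm.sub hDp)).sub ((hasDerivAt_id t0).const_mul ε)
        exact h2.congr_deriv (by simp only [Pi.sub_apply]; ring)
      have htd : 0 ≤ exp (-K*t0) * (-K) * (vm r0 t0 - vp r0 t0)
            + exp (-K*t0) * (deriv (fun s => vm r0 s) t0 - deriv (fun s => vp r0 s) t0)
            - ε := deriv_nonneg_right hτ ht0pos htime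
      -- combine
      have hcomb : deriv (fun s => vm r0 s) t0 - deriv (fun s => vp r0 s) t0
          ≤ (2*(n:ℝ)+1)*C₀*δ0 := by linarith
      rw [← hδ0def] at htd
      have h1 := mul_le_mul_of_nonneg_left hcomb hE.le
      have h2 : exp (-K*t0) * ((2*(n:ℝ)+1)*C₀*δ0) = exp (-K*t0)*K*δ0 - exp (-K*t0)*δ0 := by
        rw [hKdef]; ring
      linarith [mul_pos hE hδ0, hε]
  -- conclude from key
  intro r hr t ht
  have step1 : ∀ t' ∈ Ico (0:ℝ) tb, vm r t' ≤ vp r t' := by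
    intro t' ht'
    set tc : ℝ := (t' + tb)/2 with htcdef
    have htcIoo : tc ∈ Ioo (0:ℝ) tb := by
      constructor
      · have := ht'.1; simp only [htcdef]; linarith
      · have := ht'.2; simp only [htcdef]; linarith
    have ht'tc : t' ∈ Icc (0:ℝ) tc := ⟨ht'.1, by simp only [htcdef]; linarith [ht'.2]⟩
    have hEpos : 0 < exp (-K*t') := exp_pos _
    have hle : exp (-K*t') * (vm r t' - vp r t') ≤ 0 := by
      by_contra hgt
      push_neg at hgt
      rcases eq_or_lt_of_le ht'.1 with h0 | h0
      · have h1 := key tc htcIoo 1 one_pos r hr t' ht'tc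
        rw [← h0] at h1 hgt
        simp at h1 hgt
        linarith
      · set εx : ℝ := (exp (-K*t') * (vm r t' - vp r t'))/(2*t') with hεxdef
        have hεx : 0 < εx := by positivity
        have hkey := key tc htcIoo εx hεx r hr t' ht'tc
        have heq2 : εx * t' = exp (-K*t') * (vm r t' - vp r t') / 2 := by
          rw [hεxdef]; field_simp
        linarith
    nlinarith
  rcases eq_or_lt_of_le ht.2 with htb' | htb'
  · -- t = tb : continuity
    have hcm : ContinuousWithinAt (fun s => vm r s - vp r s) (Icc 0 tb) tb := by
      have h1 : ContinuousOn (fun s => vm r s - vp r s) (Icc 0 tb) := by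
        have := (hsm.continuousOn.sub hsp.continuousOn)
        exact this.comp (Continuous.continuousOn (continuous_const.prodMk continuous_id))
          (fun s hs => ⟨hr, hs⟩)
      exact h1 tb ⟨htb.le, le_rfl⟩
    have hlim : Tendsto (fun s => vm r s - vp r s) (nhdsWithin tb (Ico 0 tb)) (nhds (vm r tb - vp r tb)) :=
      hcm.mono_left (nhdsWithin_mono _ Ico_subset_Icc_self)
    have hle : vm r tb - vp r tb ≤ 0 := by
      have hnb : (nhdsWithin tb (Ico (0:ℝ) tb)).NeBot := by
        rw [nhdsWithin_Ico_eq_nhdsLT htb]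
        infer_instance
      refine le_of_tendsto hlim ?_
      filter_upwards [self_mem_nhdsWithin] with s hs
      have := step1 s hs
      linarith
    rw [htb']
    linarith
  · exact step1 t ⟨ht.1, htb'⟩
end

section
/- For every integer n ≥ 2 there exist constants A > 0 and r_* ∈ (0,1) such that for every δ with |δ| ≤ 1/2 and every sufficiently small ε > 0 there exists t_* > 0 with the following property. Set a = (1−δ)(n−1)/4, Λ(r) = 1/(−log r), Γ(r) = F[aΛ](r), and v⁻(r,t) = aΛ(r) + (1−ε)·t·Γ(r). Then ∂_t v⁻(r,t) ≤ F[v⁻(·,t)](r) for all (r,t) with (A/√ε)·√t ≤ r ≤ r_* and 0 < t < t_*. -/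
/-
Since `Λ' = Λ²/r`, differentiating `Λ q(Λ)/r^k` with `q` a polynomial gives a term of the same
shape. Hence `Γ = F[aΛ] = (Λ/r²) P(Λ)` with `P(Λ) = 2(n-1)a + O(Λ)`, and
`F[v⁻] - ∂ₜv⁻ = (Λ/r²) (εP + sB + s²ΛQ)` with `s = (1-ε)t/r²` and `B`, `Q` polynomials in `(a, Λ)`.
The hypothesis `(A/√ε)√t ≤ r` says `|s| ≤ ε/A²`; `B` and `Q` are bounded for `a ∈ [0, n-1]`,
`Λ ∈ [0, 1]` by compactness, and `P(Λ) ≥ (n-1)a` once `r ≤ e^(-2n)`. Taking `A² ≫ sup |B| + |Q|`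
makes the bracket nonnegative, uniformly in `δ`.
-/

open Real Set Filter

/-- `Λ(r) = 1/(-log r)`. -/
noncomputable def Lam (r : ℝ) : ℝ := 1 / (-Real.log r)

/-- The outer-region barrier `v(r,t) = a Λ(r) + b t Γ(r)`, where `Γ = F[aΛ]`. -/
noncomputable def vOuter (n : ℕ) (a b : ℝ) (r t : ℝ) : ℝ :=
  a * Lam r + b * t * Fop n (fun ρ => a * Lam ρ) r

open Topology Polynomial

theorem hasDerivAt_Lam {r : ℝ} (hr : Real.log r ≠ 0) : HasDerivAt Lam (Lam r ^ 2 / r) r := by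
  have hr0 : r ≠ 0 := by rintro rfl; simp at hr
  have h := ((Real.hasDerivAt_log hr0).neg).inv (neg_ne_zero.mpr hr)
  rw [show Lam = fun ρ => (-Real.log ρ)⁻¹ from funext fun ρ => one_div _]
  refine h.congr_deriv ?_
  simp only [Pi.neg_apply, neg_neg]
  field_simp

theorem Fop_congr {n : ℕ} {f g : ℝ → ℝ} {r : ℝ} (h : f =ᶠ[𝓝 r] g) : Fop n f r = Fop n g r := by
  simp only [Fop, h.eq_of_nhds, h.deriv_eq, h.deriv.deriv_eq]

noncomputable def lamOp (k : ℕ) (q : ℝ[X]) : ℝ[X] := X ^ 2 * derivative q + X * q - C (k : ℝ) * q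

noncomputable def lamTerm (k : ℕ) (q : ℝ[X]) (ρ : ℝ) : ℝ := Lam ρ * q.eval (Lam ρ) / ρ ^ k

theorem hasDerivAt_lamTerm (k : ℕ) (q : ℝ[X]) {r : ℝ} (hr : Real.log r ≠ 0) :
    HasDerivAt (lamTerm k q) (lamTerm (k + 1) (lamOp k q) r) r := by
  have hr0 : r ≠ 0 := by rintro rfl; simp at hr
  have hΛ := hasDerivAt_Lam hr
  have h := (hΛ.mul ((q.hasDerivAt (Lam r)).comp r hΛ)).div (hasDerivAt_pow k r)
    (pow_ne_zero k hr0)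
  have hpow : (k : ℝ) * r ^ (k - 1) = k * r ^ k / r := by
    rcases k with _ | k
    · simp
    · field_simp; simp [pow_succ]
  rw [hpow] at h
  refine HasDerivAt.congr_deriv (f := lamTerm k q) h ?_
  simp only [lamTerm, lamOp, eval_add, eval_sub, eval_mul, eval_pow, eval_X, eval_C, Function.comp,
    Pi.mul_apply]
  field_simp
  ring

theorem deriv_lamTerm_add (k : ℕ) (q₁ q₂ : ℝ[X]) (c : ℝ) {r : ℝ} (hr : Real.log r ≠ 0) :
    deriv (fun ρ => lamTerm k q₁ ρ + c * lamTerm (k + 2) q₂ ρ) r =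
      lamTerm (k + 1) (lamOp k q₁) r + c * lamTerm (k + 3) (lamOp (k + 2) q₂) r :=
  ((hasDerivAt_lamTerm k q₁ hr).add ((hasDerivAt_lamTerm (k + 2) q₂ hr).const_mul c)).deriv

noncomputable def gammaPoly (m a : ℝ) : ℝ[X] :=
  C (2 * m * a) + C (m * a - 2 * m * a ^ 2) * X - C (2 * a ^ 2) * X ^ 2 + C (3 / 2 * a ^ 2) * X ^ 3

/- `U₁, U₂` and `W₁, W₂` encode the first two `ρ`-derivatives of `aΛ = lamTerm 0 (C a)` and of
`Γ = lamTerm 2 (gammaPoly m a)` (see `deriv_lamTerm_add`); `linPoly` and `quadPoly` collect the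
terms of `F[aΛ + cΓ]` that are linear and quadratic in `c`. -/
noncomputable def linPoly (m a : ℝ) : ℝ[X] :=
  let U₁ := lamOp 0 (C a)
  let U₂ := lamOp 1 U₁
  let W₁ := lamOp 2 (gammaPoly m a)
  let W₂ := lamOp 3 W₁
  X * (C a * W₂ + gammaPoly m a * U₂ - U₁ * W₁ - gammaPoly m a * U₁ - C a * W₁
    - C (4 * m * a) * gammaPoly m a) + C m * W₁ + C (2 * m) * gammaPoly m a

noncomputable def quadPoly (m a : ℝ) : ℝ[X] :=
  let W₁ := lamOp 2 (gammaPoly m a)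
  let W₂ := lamOp 3 W₁
  gammaPoly m a * W₂ - C (1 / 2) * W₁ ^ 2 - gammaPoly m a * W₁ - C (2 * m) * gammaPoly m a ^ 2

theorem Fop_lamTerm_add (n : ℕ) (a c : ℝ) {r : ℝ} (hr : r ∈ Ioo (0 : ℝ) 1) :
    Fop n (fun ρ => lamTerm 0 (C a) ρ + c * lamTerm 2 (gammaPoly ((n : ℝ) - 1) a) ρ) r =
      Lam r / r ^ 2 * ((gammaPoly ((n : ℝ) - 1) a).eval (Lam r)
        + c / r ^ 2 * (linPoly ((n : ℝ) - 1) a).eval (Lam r)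
        + (c / r ^ 2) ^ 2 * Lam r * (quadPoly ((n : ℝ) - 1) a).eval (Lam r)) := by
  have hlog : ∀ ρ ∈ Ioo (0 : ℝ) 1, Real.log ρ ≠ 0 := fun ρ hρ => (Real.log_neg hρ.1 hρ.2).ne
  have hderiv : deriv (fun ρ => lamTerm 0 (C a) ρ + c * lamTerm 2 (gammaPoly ((n : ℝ) - 1) a) ρ)
      =ᶠ[𝓝 r] fun ρ =>
        lamTerm 1 (lamOp 0 (C a)) ρ + c * lamTerm 3 (lamOp 2 (gammaPoly ((n : ℝ) - 1) a)) ρ := by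
    filter_upwards [Ioo_mem_nhds hr.1 hr.2] with ρ hρ
    exact deriv_lamTerm_add 0 _ _ c (hlog ρ hρ)
  have hr0 : r ≠ 0 := hr.1.ne'
  rw [Fop, hderiv.deriv_eq, hderiv.eq_of_nhds, deriv_lamTerm_add 1 _ _ c (hlog r hr)]
  simp only [lamTerm, lamOp, linPoly, quadPoly, gammaPoly, eval_add, eval_sub, eval_mul, eval_pow,
    eval_X, eval_C, derivative_add, derivative_sub, derivative_mul, derivative_C, derivative_X,
    derivative_X_pow, eval_zero, eval_one, derivative_one, derivative_zero]
  field_simp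
  ring

theorem Fop_mul_Lam (n : ℕ) (a : ℝ) {r : ℝ} (hr : r ∈ Ioo (0 : ℝ) 1) :
    Fop n (fun ρ => a * Lam ρ) r = Lam r / r ^ 2 * (gammaPoly ((n : ℝ) - 1) a).eval (Lam r) := by
  have h : (fun ρ => a * Lam ρ) =ᶠ[𝓝 r]
      fun ρ => lamTerm 0 (C a) ρ + 0 * lamTerm 2 (gammaPoly ((n : ℝ) - 1) a) ρ :=
    Eventually.of_forall fun ρ => by simp [lamTerm, mul_comm]
  rw [Fop_congr h, Fop_lamTerm_add n a 0 hr]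
  ring

theorem Fop_vOuter (n : ℕ) (a b t : ℝ) {r : ℝ} (hr : r ∈ Ioo (0 : ℝ) 1) :
    Fop n (fun ρ => vOuter n a b ρ t) r =
      Lam r / r ^ 2 * ((gammaPoly ((n : ℝ) - 1) a).eval (Lam r)
        + b * t / r ^ 2 * (linPoly ((n : ℝ) - 1) a).eval (Lam r)
        + (b * t / r ^ 2) ^ 2 * Lam r * (quadPoly ((n : ℝ) - 1) a).eval (Lam r)) := by
  have h : (fun ρ => vOuter n a b ρ t) =ᶠ[𝓝 r]
      fun ρ => lamTerm 0 (C a) ρ + b * t * lamTerm 2 (gammaPoly ((n : ℝ) - 1) a) ρ := by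
    filter_upwards [Ioo_mem_nhds hr.1 hr.2] with ρ hρ
    simp only [vOuter, Fop_mul_Lam n a hρ, lamTerm, eval_C, pow_zero, div_one]
    ring
  rw [Fop_congr h, Fop_lamTerm_add n a (b * t) hr]

theorem hasDerivAt_vOuter_time (n : ℕ) (a b r t : ℝ) :
    HasDerivAt (vOuter n a b r) (b * Fop n (fun ρ => a * Lam ρ) r) t := by
  have h : vOuter n a b r = fun s => a * Lam r + s * (b * Fop n (fun ρ => a * Lam ρ) r) :=
    funext fun s => by rw [vOuter]; ring
  rw [h]
  simpa using ((hasDerivAt_id t).mul_const (b * Fop n (fun ρ => a * Lam ρ) r)).const_add (a * Lam r)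

theorem Fop_vOuter_sub_deriv_time (n : ℕ) (a b t : ℝ) {r : ℝ} (hr : r ∈ Ioo (0 : ℝ) 1) :
    Fop n (fun ρ => vOuter n a b ρ t) r - deriv (fun s => vOuter n a b r s) t =
      Lam r / r ^ 2 * ((1 - b) * (gammaPoly ((n : ℝ) - 1) a).eval (Lam r)
        + b * t / r ^ 2 * (linPoly ((n : ℝ) - 1) a).eval (Lam r)
        + (b * t / r ^ 2) ^ 2 * Lam r * (quadPoly ((n : ℝ) - 1) a).eval (Lam r)) := by
  rw [Fop_vOuter n a b t hr, (hasDerivAt_vOuter_time n a b r t).deriv, Fop_mul_Lam n a hr]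
  ring

theorem continuous_eval_linPoly (m : ℝ) :
    Continuous fun p : ℝ × ℝ => (linPoly m p.1).eval p.2 := by
  simp only [lamOp, linPoly, gammaPoly, eval_add, eval_sub, eval_mul, eval_pow, eval_X, eval_C,
    derivative_add, derivative_sub, derivative_mul, derivative_C, derivative_X, derivative_X_pow,
    eval_zero, eval_one, derivative_one, derivative_zero]
  fun_prop

theorem continuous_eval_quadPoly (m : ℝ) :
    Continuous fun p : ℝ × ℝ => (quadPoly m p.1).eval p.2 := by
  simp only [lamOp, quadPoly, gammaPoly, eval_add, eval_sub, eval_mul, eval_pow, eval_X, eval_C,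
    derivative_add, derivative_sub, derivative_mul, derivative_C, derivative_X, derivative_X_pow,
    eval_zero, eval_one, derivative_one, derivative_zero]
  fun_prop

theorem exists_bound_linPoly_quadPoly (m a₁ : ℝ) : ∃ K, ∀ a ∈ Icc 0 a₁, ∀ x ∈ Icc (0 : ℝ) 1,
    |(linPoly m a).eval x| ≤ K ∧ |(quadPoly m a).eval x| ≤ K := by
  obtain ⟨K, hK⟩ := (isCompact_Icc.prod isCompact_Icc).exists_bound_of_continuousOn
    ((continuous_eval_linPoly m).abs.add (continuous_eval_quadPoly m).abs).continuousOn
  refine ⟨K, fun a ha x hx => ?_⟩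
  have h := hK (a, x) ⟨ha, hx⟩
  simp only [Pi.add_apply, Real.norm_eq_abs] at h
  rw [abs_of_nonneg (by positivity)] at h
  constructor <;> linarith [abs_nonneg ((linPoly m a).eval x), abs_nonneg ((quadPoly m a).eval x)]

theorem mul_le_eval_gammaPoly {m a x : ℝ} (ha : 0 ≤ a) (ham : a ≤ m) (hx : 0 ≤ x)
    (hxm : 2 * (m + 1) * x ≤ 1) : m * a ≤ (gammaPoly m a).eval x := by
  simp only [gammaPoly, eval_add, eval_sub, eval_mul, eval_pow, eval_X, eval_C]
  have hm : 0 ≤ m := ha.trans ham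
  have hx1 : x ≤ 1 := by nlinarith
  have h : 2 * a ^ 2 * x * (m + x) ≤ m * a := by
    nlinarith [mul_le_mul_of_nonneg_left hxm (sq_nonneg a), mul_le_mul_of_nonneg_left ham ha,
      mul_nonneg (sq_nonneg a) (mul_nonneg hx (sub_nonneg.2 hx1))]
  nlinarith [mul_nonneg (mul_nonneg hm ha) hx, mul_nonneg (sq_nonneg a) (pow_nonneg hx 3)]

theorem subsolution_combination_nonneg {p B Q x s ε η κ K : ℝ} (hp : κ ≤ p) (hB : |B| ≤ K)
    (hQ : |Q| ≤ K) (hx0 : 0 ≤ x) (hx1 : x ≤ 1) (hs : |s| ≤ ε * η) (hε : 0 < ε) (hε1 : ε ≤ 1)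
    (hη : η ≤ 1) (hK : 2 * K * η ≤ κ) : 0 ≤ ε * p + s * B + s ^ 2 * x * Q := by
  have hK0 : 0 ≤ K := (abs_nonneg B).trans hB
  have hη0 : 0 ≤ η := nonneg_of_mul_nonneg_right ((abs_nonneg s).trans hs) hε
  have hεη : ε * η ≤ 1 := mul_le_one₀ hε1 hη0 hη
  have hsB : -(ε * η * K) ≤ s * B := by
    have := mul_le_mul hs hB (abs_nonneg B) (by positivity)
    rw [← abs_mul] at this
    linarith [neg_abs_le (s * B)]
  have hsQ : -(ε * η * K) ≤ s ^ 2 * x * Q := by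
    have hs2 : s ^ 2 ≤ ε * η :=
      calc s ^ 2 = |s| ^ 2 := (sq_abs s).symm
        _ ≤ (ε * η) ^ 2 := by gcongr
        _ ≤ ε * η := pow_le_of_le_one (by positivity) hεη two_ne_zero
    have : |s ^ 2 * x * Q| ≤ ε * η * K := by
      rw [abs_mul, abs_mul, abs_of_nonneg (sq_nonneg s), abs_of_nonneg hx0]
      calc s ^ 2 * x * |Q| ≤ ε * η * 1 * K := by gcongr
        _ = ε * η * K := by ring
    linarith [neg_abs_le (s ^ 2 * x * Q)]
  nlinarith [mul_le_mul_of_nonneg_left hp hε.le, mul_le_mul_of_nonneg_left hK hε.le]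

theorem mul_Lam_le_one_of_le_exp {r L : ℝ} (hr : 0 < r) (hL : 0 < L) (hrL : r ≤ Real.exp (-L)) :
    L * Lam r ≤ 1 := by
  have h : L ≤ -Real.log r := by
    have := Real.log_le_log hr hrL
    rw [Real.log_exp] at this
    linarith
  rw [Lam, mul_one_div, div_le_one (hL.trans_le h)]
  exact h

theorem abs_mul_div_sq_le {A ε r t b : ℝ} (hA : 0 < A) (hε : 0 < ε) (ht : 0 < t) (hb : |b| ≤ 1)
    (h : A / √ε * √t ≤ r) : |b * t / r ^ 2| ≤ ε * (1 / A ^ 2) := by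
  have hr : 0 < r := lt_of_lt_of_le (by positivity) h
  have h2 : A ^ 2 * t / ε ≤ r ^ 2 := by
    calc A ^ 2 * t / ε = (A / √ε * √t) ^ 2 := by
          rw [mul_pow, div_pow, Real.sq_sqrt hε.le, Real.sq_sqrt ht.le]; ring
      _ ≤ r ^ 2 := by gcongr
  rw [div_le_iff₀ hε] at h2
  calc |b * t / r ^ 2| = |b| * (t / r ^ 2) := by
        rw [abs_div, abs_mul, abs_of_pos ht, abs_of_pos (pow_pos hr 2)]; ring
    _ ≤ 1 * (t / r ^ 2) := by gcongr
    _ ≤ ε * (1 / A ^ 2) := by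
        rw [one_mul, div_le_iff₀ (by positivity)]
        field_simp
        linarith

/-- Outer-region subsolution: with `a = (1-δ)(n-1)/4`,
`v⁻(r,t) = aΛ(r) + (1-ε) t F[aΛ](r)` is a subsolution for `(A/√ε)√t ≤ r ≤ r_*`, `0 < t < t_*`. -/
theorem stmt2 (n : ℕ) (hn : 2 ≤ n) :
    ∃ A > (0:ℝ), ∃ rstar ∈ Ioo (0:ℝ) 1,
      ∀ δ : ℝ, |δ| ≤ 1/2 →
        ∃ ε₀ > (0:ℝ), ∀ ε : ℝ, 0 < ε → ε < ε₀ →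
          ∃ tstar > (0:ℝ),
            ∀ r t : ℝ, A / Real.sqrt ε * Real.sqrt t ≤ r → r ≤ rstar →
              0 < t → t < tstar →
              deriv (fun s => vOuter n ((1 - δ) * ((n:ℝ) - 1) / 4) (1 - ε) r s) t ≤
                Fop n (fun ρ => vOuter n ((1 - δ) * ((n:ℝ) - 1) / 4) (1 - ε) ρ t) r := by
  set m : ℝ := (n : ℝ) - 1
  have hm : 1 ≤ m := by
    have : (2 : ℝ) ≤ n := by exact_mod_cast hn
    linarith
  obtain ⟨K, hK⟩ := exists_bound_linPoly_quadPoly m m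
  set A : ℝ := 16 * |K| + 1
  have hA : 1 ≤ A := by linarith [abs_nonneg K]
  have hrstar : Real.exp (-(2 * (m + 1))) < 1 := Real.exp_lt_one_iff.mpr (by linarith)
  refine ⟨A, by positivity, Real.exp (-(2 * (m + 1))), ⟨Real.exp_pos _, hrstar⟩, fun δ hδ => ?_⟩
  refine ⟨1, one_pos, fun ε hε hε1 => ⟨1, one_pos, fun r t hrt hr ht _ => ?_⟩⟩
  obtain ⟨hδl, hδu⟩ := abs_le.mp hδ
  set a : ℝ := (1 - δ) * m / 4 with ha_def
  have ha : 0 ≤ a := by rw [ha_def]; nlinarith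
  have ham : a ≤ m := by rw [ha_def]; nlinarith
  have hma : 1 / 8 ≤ m * a := by rw [ha_def]; nlinarith
  have hr0 : 0 < r := lt_of_lt_of_le (by positivity) hrt
  have hrI : r ∈ Ioo (0 : ℝ) 1 := ⟨hr0, hr.trans_lt hrstar⟩
  have hx0 : 0 < Lam r := div_pos one_pos (neg_pos.mpr (Real.log_neg hrI.1 hrI.2))
  have hx : 2 * (m + 1) * Lam r ≤ 1 := mul_Lam_le_one_of_le_exp hr0 (by positivity) hr
  have hx1 : Lam r ≤ 1 := by nlinarith
  have hs := abs_mul_div_sq_le (b := 1 - ε) (by positivity) hε ht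
    (abs_le.mpr ⟨by linarith, by linarith⟩) hrt
  have hη : 1 / A ^ 2 ≤ 1 := by rw [div_le_one (by positivity)]; nlinarith
  have hKA : 2 * K * (1 / A ^ 2) ≤ m * a := by
    rw [← mul_div_assoc, mul_one, div_le_iff₀ (by positivity)]
    nlinarith [le_abs_self K, abs_nonneg K]
  obtain ⟨hB, hQ⟩ := hK a ⟨ha, ham⟩ (Lam r) ⟨hx0.le, hx1⟩
  rw [← sub_nonneg, Fop_vOuter_sub_deriv_time n a (1 - ε) t hrI, sub_sub_cancel]
  exact mul_nonneg (by positivity) (subsolution_combination_nonneg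
    (mul_le_eval_gammaPoly ha ham hx0.le hx) hB hQ hx0.le hx1 hs hε (by linarith) hη hKA)
end

section
/- Let n ≥ 2 be an integer, let A > 0 and ε > 0, and set ρ_* = A/√ε and W₀(ρ) = ((n−1)/2)·(1 + 2(n−1)/ρ²). There exist B > 1 and t_* ∈ (0, 1/e) such that for every γ ∈ [0, 1/2], the function v⁻(r,t) = (1/(−log t))·[ (1−γ)·W₀(r/√t) − B²/((−log t)·(r/√t)⁴) ] satisfies ∂_t v⁻(r,t) ≤ F[v⁻(·,t)](r) for all (r,t) with (B/√ε)·√(t/(−log t)) ≤ r ≤ 3ρ_*·√t and 0 < t < t_*. -/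
open Real Set Filter Topology

/-- `W₀(ρ) = ((n-1)/2)(1 + 2(n-1)/ρ²)`. -/
noncomputable def W0 (n : ℕ) (ρ : ℝ) : ℝ :=
  (((n:ℝ) - 1) / 2) * (1 + 2 * ((n:ℝ) - 1) / ρ^2)

/-- The parabolic-region subsolution
`v⁻(r,t) = (1/(-log t))·[(1-γ)W₀(r/√t) - B²/((-log t)(r/√t)⁴)]`. -/
noncomputable def vParSub (n : ℕ) (γ B : ℝ) (r t : ℝ) : ℝ :=
  (1 / (-Real.log t)) *
    ((1 - γ) * W0 n (r / Real.sqrt t) - B^2 / ((-Real.log t) * (r / Real.sqrt t)^4))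

lemma hasDerivAt_const_div_pow (c : ℝ) (k : ℕ) {r : ℝ} (hr : r ≠ 0) :
    HasDerivAt (fun ρ => c / ρ ^ k) (-k * c / r ^ (k + 1)) r := by
  refine ((hasDerivAt_const r c).div (hasDerivAt_pow k r) (pow_ne_zero k hr)).congr_deriv ?_
  rcases k with _ | k
  · simp
  · rw [Nat.add_sub_cancel]
    field_simp
    ring

section RadialProfile

variable (α β δ : ℝ) {r : ℝ}

lemma deriv_const_add_div_sq_sub_div_pow_four (hr : r ≠ 0) :
    deriv (fun ρ => α + β / ρ ^ 2 - δ / ρ ^ 4) r = -2 * β / r ^ 3 + 4 * δ / r ^ 5 := by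
  refine (((hasDerivAt_const_div_pow β 2 hr).const_add α).sub
    (hasDerivAt_const_div_pow δ 4 hr)).deriv.trans ?_
  push_cast
  ring

lemma deriv_deriv_const_add_div_sq_sub_div_pow_four (hr : r ≠ 0) :
    deriv (deriv fun ρ => α + β / ρ ^ 2 - δ / ρ ^ 4) r
      = 6 * β / r ^ 4 - 20 * δ / r ^ 6 := by
  have hderiv : deriv (fun ρ => α + β / ρ ^ 2 - δ / ρ ^ 4)
      =ᶠ[𝓝 r] fun ρ => -2 * β / ρ ^ 3 + 4 * δ / ρ ^ 5 := by
    filter_upwards [isOpen_ne.mem_nhds hr] with ρ hρ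
    exact deriv_const_add_div_sq_sub_div_pow_four α β δ hρ
  rw [hderiv.deriv_eq]
  refine ((hasDerivAt_const_div_pow (-2 * β) 3 hr).add
    (hasDerivAt_const_div_pow (4 * δ) 5 hr)).deriv.trans ?_
  push_cast
  ring

end RadialProfile

lemma vParSub_eq (n : ℕ) (γ B r : ℝ) {t : ℝ} (ht : 0 < t) :
    vParSub n γ B r t = (1 - γ) * (n - 1) / 2 / -log t
      + (1 - γ) * (n - 1) ^ 2 * t / -log t / r ^ 2 - B ^ 2 * t ^ 2 / log t ^ 2 / r ^ 4 := by
  have h2 : (r / √t) ^ 2 = r ^ 2 / t := by rw [div_pow, sq_sqrt ht.le]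
  have h4 : (r / √t) ^ 4 = r ^ 4 / t ^ 2 := by
    rw [show (4 : ℕ) = 2 * 2 from rfl, pow_mul, h2, div_pow]; ring
  rw [vParSub, W0, h4, h2]
  simp only [div_eq_mul_inv, mul_inv, inv_inv]
  ring

lemma hasDerivAt_vParSub_time (n : ℕ) (γ B r : ℝ) {t : ℝ} (ht : 0 < t) (hlog : log t ≠ 0) :
    HasDerivAt (fun s => vParSub n γ B r s)
      ((1 - γ) * (n - 1) / 2 / (t * log t ^ 2)
        + (1 - γ) * (n - 1) ^ 2 / r ^ 2 * (1 / -log t + 1 / log t ^ 2)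
        - 2 * (B ^ 2 / r ^ 4) * t * (1 / log t ^ 2 - 1 / log t ^ 3)) t := by
  have hL : HasDerivAt (fun s => -log s) (-t⁻¹) t := (hasDerivAt_log ht.ne').neg
  have hL0 : -log t ≠ 0 := neg_ne_zero.2 hlog
  have h1 := (hasDerivAt_const t ((1 - γ) * (n - 1) / 2)).fun_div hL hL0
  have h2 := ((hasDerivAt_id t).const_mul ((1 - γ) * (n - 1) ^ 2)).fun_div hL hL0
  have h3 := ((hasDerivAt_pow 2 t).const_mul (B ^ 2)).fun_div ((hasDerivAt_log ht.ne').fun_pow 2)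
    (pow_ne_zero 2 hlog)
  refine (((h1.add (h2.div_const (r ^ 2))).sub (h3.div_const (r ^ 4))).congr_deriv ?_
    ).congr_of_eventuallyEq ?_
  · simp only [id]
    field_simp
    ring
  · filter_upwards [Ioi_mem_nhds ht] with s hs
    rw [vParSub_eq n γ B r hs, Pi.sub_apply, Pi.add_apply, id]

noncomputable def subsolutionDefect (a m K x u : ℝ) : ℝ :=
  2 * u * x - a * (1 + 2 * m * x + 2 * a * m * x)
    + (2 * K + 8 * a ^ 2 * m * (2 - m) + 4 * a * (m - 6) * u) * x ^ 2
    + (2 * K * m + 8 * a ^ 2 * m ^ 2 * (3 - m) + 8 * a * m * (m - 6) * u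
      + 2 * (8 - m) * u ^ 2) * x ^ 3

lemma Fop_vParSub_sub_deriv (n : ℕ) (γ B : ℝ) {r t : ℝ} (hr : r ≠ 0) (ht : 0 < t)
    (hlog : log t ≠ 0) :
    Fop n (fun ρ => vParSub n γ B ρ t) r - deriv (fun s => vParSub n γ B r s) t
      = subsolutionDefect ((1 - γ) * (n - 1) / 2) (n - 1) (B ^ 2) (t / r ^ 2)
          (B ^ 2 * (t / r ^ 2) / -log t) / (t * log t ^ 2) := by
  have hv : (fun ρ => vParSub n γ B ρ t) = fun ρ => (1 - γ) * (n - 1) / 2 / -log t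
      + (1 - γ) * (n - 1) ^ 2 * t / -log t / ρ ^ 2 - B ^ 2 * t ^ 2 / log t ^ 2 / ρ ^ 4 :=
    funext fun ρ => vParSub_eq n γ B ρ ht
  rw [Fop, hv, deriv_const_add_div_sq_sub_div_pow_four _ _ _ hr,
    deriv_deriv_const_add_div_sq_sub_div_pow_four _ _ _ hr,
    (hasDerivAt_vParSub_time n γ B r ht hlog).deriv, vParSub_eq n γ B r ht, subsolutionDefect]
  field_simp
  ring

lemma subsolutionDefect_nonneg {a m K x y u ε : ℝ} (ha : 0 ≤ a) (ham : 2 * a ≤ m)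
    (hx : 0 < x) (hxy : 1 ≤ x * y) (hu : 0 ≤ u) (huε : u ≤ ε)
    (hK : m * y ^ 2 / 2 + m ^ 2 * y + m ^ 3 * y / 2 + 2 * m ^ 4 + 24 * m * ε + 2 * ε ^ 2
      ≤ 2 * K) :
    0 ≤ subsolutionDefect a m K x u := by
  have hm : 0 ≤ m := by linarith
  have hy : 0 < y := by
    by_contra! hy
    nlinarith
  have ha2 : 4 * a ^ 2 ≤ m ^ 2 := by nlinarith
  -- `x ≥ 1/y` lets the `x²` terms absorb the lower-order ones.
  have hlow : a * (1 + 2 * m * x + 2 * a * m * x)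
      ≤ (a * y ^ 2 + 2 * a * m * y + 2 * a ^ 2 * m * y) * x ^ 2 := by
    have h1 : 1 ≤ (x * y) ^ 2 := by nlinarith
    have h2 : x ≤ y * x ^ 2 := by nlinarith
    nlinarith [mul_le_mul_of_nonneg_left h1 ha,
      mul_le_mul_of_nonneg_left h2 (by positivity : 0 ≤ 2 * a * m * (1 + a))]
  have hquad : a * y ^ 2 + 2 * a * m * y + 2 * a ^ 2 * m * y
      ≤ 2 * K + 8 * a ^ 2 * m * (2 - m) + 4 * a * (m - 6) * u := by
    nlinarith [mul_le_mul_of_nonneg_right ham (sq_nonneg y),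
      mul_le_mul_of_nonneg_right ham (mul_nonneg hm hy.le),
      mul_le_mul_of_nonneg_right ha2 (mul_nonneg hm hy.le),
      mul_le_mul_of_nonneg_right ha2 (sq_nonneg m), mul_le_mul_of_nonneg_right ham hu,
      mul_le_mul_of_nonneg_left huε hm, mul_nonneg (mul_nonneg ha hm) hu,
      mul_nonneg (sq_nonneg a) hm]
  have hcubic : 0 ≤ 2 * K * m + 8 * a ^ 2 * m ^ 2 * (3 - m) + 8 * a * m * (m - 6) * u
      + 2 * (8 - m) * u ^ 2 := by
    have hu2 : u ^ 2 ≤ ε ^ 2 := pow_le_pow_left₀ hu huε 2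
    have hy2 : 0 ≤ m * y ^ 2 / 2 + m ^ 2 * y + m ^ 3 * y / 2 := by positivity
    nlinarith [mul_le_mul_of_nonneg_right ha2 (pow_nonneg hm 3),
      mul_le_mul_of_nonneg_right ham (mul_nonneg hm hu),
      mul_le_mul_of_nonneg_left huε (sq_nonneg m), mul_le_mul_of_nonneg_left hu2 hm,
      mul_nonneg (mul_nonneg ha (sq_nonneg m)) hu, mul_nonneg (sq_nonneg a) (sq_nonneg m),
      mul_le_mul_of_nonneg_left hK hm, sq_nonneg u, mul_nonneg hm hy2]
  unfold subsolutionDefect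
  linarith [mul_le_mul_of_nonneg_right hquad (sq_nonneg x), mul_nonneg hcubic (pow_nonneg hx.le 3),
    mul_nonneg hu hx.le]

lemma one_le_div_sq_mul_sq_of_le_mul_sqrt {c r t : ℝ} (hr : 0 < r) (ht : 0 ≤ t)
    (h : r ≤ c * √t) : 1 ≤ t / r ^ 2 * c ^ 2 := by
  have h2 := pow_le_pow_left₀ hr.le h 2
  rw [mul_pow, sq_sqrt ht] at h2
  rw [div_mul_eq_mul_div, le_div_iff₀ (by positivity)]
  linarith

lemma sq_mul_div_sq_div_le_of_div_sqrt_mul_sqrt_le {B ε r t L : ℝ} (hB : 0 ≤ B) (hε : 0 < ε)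
    (ht : 0 ≤ t) (hL : 0 < L) (hr : 0 < r) (h : B / √ε * √(t / L) ≤ r) :
    B ^ 2 * (t / r ^ 2) / L ≤ ε := by
  have h2 := pow_le_pow_left₀ (by positivity) h 2
  rw [mul_pow, div_pow, sq_sqrt hε.le, sq_sqrt (div_nonneg ht hL.le), div_mul_div_comm,
    div_le_iff₀ (mul_pos hε hL)] at h2
  rw [div_le_iff₀ hL, mul_div_assoc', div_le_iff₀ (by positivity)]
  linarith

theorem stmt4_general (n : ℕ) (hn : 2 ≤ n) (A ε : ℝ) (hε : 0 < ε) :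
    ∃ B > (1:ℝ), ∃ tstar ∈ Ioo (0:ℝ) (Real.exp (-1)),
      ∀ γ ∈ Icc (0:ℝ) (1/2),
        ∀ r t : ℝ,
          B / Real.sqrt ε * Real.sqrt (t / (-Real.log t)) ≤ r →
          r ≤ 3 * (A / Real.sqrt ε) * Real.sqrt t →
          0 < t → t < tstar →
          deriv (fun s => vParSub n γ B r s) t ≤ Fop n (fun ρ => vParSub n γ B ρ t) r := by
  have hm : 1 ≤ (n : ℝ) - 1 := by
    have : (2 : ℝ) ≤ n := by exact_mod_cast hn
    linarith
  set m : ℝ := n - 1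
  set y := (3 * (A / √ε)) ^ 2
  set M := m * y ^ 2 / 2 + m ^ 2 * y + m ^ 3 * y / 2 + 2 * m ^ 4 + 24 * m * ε + 2 * ε ^ 2
  have hM : 0 < M := by positivity
  have hK : M ≤ 2 * (1 + M) ^ 2 := by nlinarith
  refine ⟨1 + M, by linarith, exp (-2), ⟨exp_pos _, exp_lt_exp.2 (by norm_num)⟩, ?_⟩
  intro γ hγ r t hlow hupp ht htstar
  have hlog : log t < 0 := by
    have := (log_lt_log ht htstar).trans_eq (log_exp _)
    linarith
  have hr : 0 < r := lt_of_lt_of_le (mul_pos (div_pos (by linarith) (sqrt_pos.2 hε))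
    (sqrt_pos.2 (div_pos ht (neg_pos.2 hlog)))) hlow
  rw [← sub_nonneg, Fop_vParSub_sub_deriv n γ (1 + M) hr.ne' ht hlog.ne]
  refine div_nonneg (subsolutionDefect_nonneg (y := y) ?_ ?_ (by positivity)
    (one_le_div_sq_mul_sq_of_le_mul_sqrt hr ht.le hupp) (div_nonneg (by positivity) (by linarith))
    (sq_mul_div_sq_div_le_of_div_sqrt_mul_sqrt_le (by linarith) hε ht.le (neg_pos.2 hlog) hr hlow)
    hK) (by positivity)
  · nlinarith [hγ.2]
  · nlinarith [hγ.1]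

/-- Parabolic-region subsolution: for suitable `B > 1` and `t_* ∈ (0, 1/e)`, `v⁻` is a
subsolution of `v_t = F[v]` on `(B/√ε)√(t/(-log t)) ≤ r ≤ 3ρ_*√t`, `0 < t < t_*`,
for every `γ ∈ [0, 1/2]`. -/
theorem stmt4 (n : ℕ) (hn : 2 ≤ n) (A ε : ℝ) (hA : 0 < A) (hε : 0 < ε) :
    ∃ B > (1:ℝ), ∃ tstar ∈ Ioo (0:ℝ) (Real.exp (-1)),
      ∀ γ ∈ Icc (0:ℝ) (1/2),
        ∀ r t : ℝ,
          B / Real.sqrt ε * Real.sqrt (t / (-Real.log t)) ≤ r →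
          r ≤ 3 * (A / Real.sqrt ε) * Real.sqrt t →
          0 < t → t < tstar →
          deriv (fun s => vParSub n γ B r s) t ≤ Fop n (fun ρ => vParSub n γ B ρ t) r :=
  stmt4_general n hn A ε hε
end

section
/- Let n ≥ 2 be an integer, let ε ∈ (0,1), let σ₀ > 1, and let η > 0, C < ∞. Let V₀, V₁ : (0,∞) → ℝ be smooth functions such that: (i) F[V₀] = 0 on (0,∞); (ii) −σ·V₀'(σ) ≥ η·σ² for all σ ∈ (0, σ₀); (iii) dF_{V₀}[V₁](σ) = −σ·V₀'(σ) for all σ > 0; (iv) |V₁(σ)| + |σ·V₁'(σ)| + |Q[V₁](σ)| ≤ C·σ² for all σ ∈ (0, σ₀). Then there exists t_* ∈ (0, 1/e) such that the function v(r,t) = V₀(r/θ(t)) + (1+ε)·θ(t)θ'(t)·V₁(r/θ(t)) satisfies ∂_t v(r,t) ≤ F[v(·,t)](r) for all (r,t) with 0 < r < σ₀·θ(t) and 0 < t < t_*. -/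
open Real Set Filter

/-- The linearization `dF_V[W]` of `F` at `V`. -/
noncomputable def dFop (n : ℕ) (V W : ℝ → ℝ) (σ : ℝ) : ℝ :=
  V σ * deriv (deriv W) σ
    + ((((n:ℝ) - 1 - V σ) / σ) - deriv V σ) * deriv W σ
    + (deriv (deriv V) σ - deriv V σ / σ + (2 * ((n:ℝ) - 1) / σ^2) * (1 - 2 * V σ)) * W σ

/-- The quadratic part `Q[V]` of `F`. -/
noncomputable def Qop (n : ℕ) (V : ℝ → ℝ) (σ : ℝ) : ℝ :=
  V σ * deriv (deriv V) σ - (1/2) * (deriv V σ)^2 - V σ * deriv V σ / σ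
    - (2 * ((n:ℝ) - 1) / σ^2) * (V σ)^2

/-- `θ(t) = √(t/(-log t))`. -/
noncomputable def theta (t : ℝ) : ℝ := Real.sqrt (t / (-Real.log t))

/-- `θ(t)·θ'(t) = (1/2)(1/(-log t) + 1/(log t)²)`. -/
noncomputable def thetaThetaPrime (t : ℝ) : ℝ :=
  (1/2) * (1 / (-Real.log t) + 1 / (Real.log t)^2)

/- ### Auxiliary lemmas -/

open Topology

lemma my_theta_sq {t : ℝ} (ht : 0 < t) (hl : Real.log t < 0) :
    theta t ^ 2 = t / (-Real.log t) :=
  Real.sq_sqrt (div_nonneg ht.le (by linarith))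

lemma my_theta_pos {t : ℝ} (ht : 0 < t) (hl : Real.log t < 0) : 0 < theta t :=
  Real.sqrt_pos.2 (div_pos ht (by linarith))

lemma my_hasDerivAt_inner {t : ℝ} (ht : 0 < t) (hl : Real.log t < 0) :
    HasDerivAt (fun s => s / (-Real.log s)) (2 * thetaThetaPrime t) t := by
  have h1 : HasDerivAt (fun s => -Real.log s) (-t⁻¹) t := (Real.hasDerivAt_log ht.ne').neg
  have h2 : HasDerivAt (fun s : ℝ => s) 1 t := hasDerivAt_id t
  have h3 := h2.div h1 (by linarith : -Real.log t ≠ 0)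
  refine h3.congr_deriv (Eq.symm ?_)
  have hl0 : Real.log t ≠ 0 := ne_of_lt hl
  rw [thetaThetaPrime, show t * -t⁻¹ = -1 by field_simp]
  field_simp
  ring_nf

lemma my_hasDerivAt_theta {t : ℝ} (ht : 0 < t) (hl : Real.log t < 0) :
    HasDerivAt theta (thetaThetaPrime t / theta t) t := by
  have hf : 0 < t / (-Real.log t) := div_pos ht (by linarith)
  have h := (Real.hasDerivAt_sqrt hf.ne').comp t (my_hasDerivAt_inner ht hl)
  refine h.congr_deriv (Eq.symm ?_)
  rw [show Real.sqrt (t / (-Real.log t)) = theta t from rfl]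
  have hθ : 0 < theta t := my_theta_pos ht hl
  field_simp

lemma my_hasDerivAt_ttp {t : ℝ} (ht : 0 < t) (hl : Real.log t < 0) :
    HasDerivAt thetaThetaPrime
      ((1/2) * (1/(t*(Real.log t)^2) - 2/(t*(Real.log t)^3))) t := by
  have hlog : HasDerivAt Real.log t⁻¹ t := Real.hasDerivAt_log ht.ne'
  have h1 : HasDerivAt (fun s => -Real.log s) (-t⁻¹) t := hlog.neg
  have h2 : HasDerivAt (fun s => (-Real.log s)⁻¹) (-(-t⁻¹) / (-Real.log t)^2) t :=
    h1.inv (by linarith)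
  have h3 : HasDerivAt (fun s => (Real.log s)^2) (2 * Real.log t ^ 1 * t⁻¹) t := by
    exact (hlog.pow 2).congr_deriv (by norm_num)
  have h4 : HasDerivAt (fun s => ((Real.log s)^2)⁻¹)
      (-(2 * Real.log t ^ 1 * t⁻¹) / ((Real.log t)^2)^2) t :=
    h3.inv (pow_ne_zero 2 (ne_of_lt hl))
  have h5 := ((h2.add h4).const_mul (1/2 : ℝ))
  have heq : thetaThetaPrime = fun s => (1/2) * ((-Real.log s)⁻¹ + ((Real.log s)^2)⁻¹) := by
    funext s; rw [thetaThetaPrime]; rw [one_div, one_div]; norm_num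
  rw [heq]
  refine h5.congr_deriv (Eq.symm ?_)
  have hl0 : Real.log t ≠ 0 := by linarith
  field_simp
  ring

lemma my_derivs_aux (V : ℝ → ℝ) (hV : ContDiffOn ℝ (⊤ : ℕ∞) V (Ioi (0:ℝ))) {x : ℝ} (hx : 0 < x) :
    HasDerivAt V (deriv V x) x ∧ HasDerivAt (deriv V) (deriv (deriv V) x) x := by
  have hmem : Ioi (0:ℝ) ∈ 𝓝 x := isOpen_Ioi.mem_nhds hx
  have h1 : ContDiffAt ℝ (⊤ : ℕ∞) V x := hV.contDiffAt hmem
  have hd : ContDiffOn ℝ 1 (deriv V) (Ioi 0) := hV.deriv_of_isOpen isOpen_Ioi (WithTop.coe_le_coe.2 le_top)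
  exact ⟨(h1.differentiableAt (by simp)).hasDerivAt,
    ((hd.contDiffAt hmem).differentiableAt one_ne_zero).hasDerivAt⟩

set_option maxHeartbeats 1000000 in
lemma my_keyineq (ε η C σ τ L u P B1 B2 Q : ℝ)
    (hε0 : 0 < ε) (hε1 : ε < 1) (hη : 0 < η) (hC : 0 ≤ C) (hσ : 0 < σ)
    (hτ : 0 < τ) (hL : 2 ≤ L) (hu : 0 < u)
    (hP : η*σ^2 ≤ P)
    (hB1 : |B1| ≤ C*σ^2) (hB2 : |B2| ≤ C*σ^2) (hQ : -(C*σ^2) ≤ Q)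
    (hτL1 : 1 ≤ 2*(τ*L)) (hτL2 : τ*L ≤ 1) (huL : u*L^2 ≤ 1)
    (hC28 : 28*C ≤ L*(ε*η)) :
    0 ≤ L*(ε*τ)*P + L*(1+ε)^2*τ^2*Q + L*(1+ε)*τ^2*B2 - (1+ε)*u*B1 := by
  obtain ⟨hB1a, hB1b⟩ := abs_le.1 hB1
  obtain ⟨hB2a, hB2b⟩ := abs_le.1 hB2
  have hL0 : 0 < L := by linarith
  have hτle : τ ≤ 1/L := by rw [le_div_iff₀ hL0]; linarith
  have hule : u ≤ 1/L^2 := by rw [le_div_iff₀ (by positivity)]; linarith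
  have hεησ : 0 ≤ ε*η*σ^2 := by positivity
  have hCσ : 0 ≤ C*σ^2 := by positivity
  have hCτ : C*τ ≤ ε*η/28 := by
    have h1 : C*τ ≤ C*(1/L) := mul_le_mul_of_nonneg_left hτle hC
    have h2 : C*(1/L) ≤ ε*η/28 := by
      rw [mul_one_div, div_le_div_iff₀ hL0 (by norm_num)]; linarith
    linarith
  have hCu : C*u ≤ ε*η/56 := by
    have h1 : C*u ≤ C*(1/L^2) := mul_le_mul_of_nonneg_left hule hC
    have h2 : C*(1/L^2) ≤ ε*η/56 := by
      rw [mul_one_div, div_le_div_iff₀ (by positivity) (by norm_num)]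
      nlinarith
    linarith
  have hT1 : (1/2)*(ε*η*σ^2) ≤ L*(ε*τ)*P := by
    nlinarith [mul_le_mul_of_nonneg_left hP (by positivity : (0:ℝ) ≤ L*(ε*τ)),
      mul_le_mul_of_nonneg_right hτL1 hεησ]
  have h4 : (1+ε)^2 ≤ 4 := by nlinarith
  have hK2 : L*(1+ε)^2*τ^2 ≤ 4*τ := by
    nlinarith [mul_le_mul_of_nonneg_right hτL2 (by positivity : (0:ℝ) ≤ (1+ε)^2*τ),
      mul_le_mul_of_nonneg_right h4 hτ.le]
  have hK3 : L*(1+ε)*τ^2 ≤ 2*τ := by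
    nlinarith [mul_le_mul_of_nonneg_right hτL2 (by positivity : (0:ℝ) ≤ (1+ε)*τ)]
  have hT2 : -((1/7)*(ε*η*σ^2)) ≤ L*(1+ε)^2*τ^2*Q := by
    have := mul_le_mul_of_nonneg_left hQ (by positivity : (0:ℝ) ≤ L*(1+ε)^2*τ^2)
    nlinarith [mul_le_mul_of_nonneg_right hK2 hCσ, mul_le_mul_of_nonneg_right hCτ (sq_nonneg σ)]
  have hT3 : -((1/14)*(ε*η*σ^2)) ≤ L*(1+ε)*τ^2*B2 := by
    have := mul_le_mul_of_nonneg_left hB2a (by positivity : (0:ℝ) ≤ L*(1+ε)*τ^2)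
    nlinarith [mul_le_mul_of_nonneg_right hK3 hCσ, mul_le_mul_of_nonneg_right hCτ (sq_nonneg σ)]
  have hT4 : (1+ε)*u*B1 ≤ (1/28)*(ε*η*σ^2) := by
    have h1 : (1+ε)*u*B1 ≤ (1+ε)*u*(C*σ^2) :=
      mul_le_mul_of_nonneg_left hB1b (by positivity)
    nlinarith [mul_le_mul_of_nonneg_right hCu (sq_nonneg σ),
      mul_nonneg hu.le hCσ]
  linarith

set_option maxHeartbeats 1000000 in
/-- Inner-region subsolution: if `F[V₀] = 0`, `-σV₀' ≥ ησ²` on `(0,σ₀)`,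
`dF_{V₀}[V₁] = -σV₀'`, and `|V₁| + |σV₁'| + |Q[V₁]| ≤ Cσ²` on `(0,σ₀)`, then there is
`t_* ∈ (0,1/e)` such that `v(r,t) = V₀(r/θ) + (1+ε)θθ' V₁(r/θ)` is a subsolution of
`v_t = F[v]` for `0 < r < σ₀ θ(t)`, `0 < t < t_*`. -/
theorem stmt6 (n : ℕ) (hn : 2 ≤ n) (ε : ℝ) (hε : ε ∈ Ioo (0:ℝ) 1)
    (σ₀ : ℝ) (hσ₀ : 1 < σ₀) (η C : ℝ) (hη : 0 < η)
    (V₀ V₁ : ℝ → ℝ)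
    (hV₀ : ContDiffOn ℝ (⊤ : ℕ∞) V₀ (Ioi 0)) (hV₁ : ContDiffOn ℝ (⊤ : ℕ∞) V₁ (Ioi 0))
    (hi : ∀ σ : ℝ, 0 < σ → Fop n V₀ σ = 0)
    (hii : ∀ σ ∈ Ioo (0:ℝ) σ₀, η * σ^2 ≤ -(σ * deriv V₀ σ))
    (hiii : ∀ σ : ℝ, 0 < σ → dFop n V₀ V₁ σ = -(σ * deriv V₀ σ))
    (hiv : ∀ σ ∈ Ioo (0:ℝ) σ₀, |V₁ σ| + |σ * deriv V₁ σ| + |Qop n V₁ σ| ≤ C * σ^2) :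
    ∃ tstar ∈ Ioo (0:ℝ) (Real.exp (-1)),
      ∀ r t : ℝ, 0 < r → r < σ₀ * theta t → 0 < t → t < tstar →
        deriv (fun s => V₀ (r / theta s) + (1 + ε) * thetaThetaPrime s * V₁ (r / theta s)) t ≤
          Fop n (fun ρ => V₀ (ρ / theta t) + (1 + ε) * thetaThetaPrime t * V₁ (ρ / theta t)) r := by
  obtain ⟨hε0, hε1⟩ := hε
  -- C is nonnegative
  have hC : 0 ≤ C := by
    have h := hiv (1/2) ⟨by norm_num, by linarith⟩
    nlinarith [abs_nonneg (V₁ (1/2 : ℝ)), abs_nonneg ((1/2 : ℝ) * deriv V₁ (1/2)),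
      abs_nonneg (Qop n V₁ (1/2))]
  set L₀ : ℝ := 2 + 28*C/(ε*η) with hL₀def
  have hL₀2 : 2 ≤ L₀ := by
    rw [hL₀def]
    have : 0 ≤ 28*C/(ε*η) := by positivity
    linarith
  refine ⟨Real.exp (-L₀), ⟨Real.exp_pos _, Real.exp_lt_exp.2 (by linarith)⟩, ?_⟩
  intro r t hr hrσ ht htstar
  have hlt : Real.log t < -L₀ := by
    have := Real.log_lt_log ht htstar
    rwa [Real.log_exp] at this
  set l : ℝ := Real.log t with hldef
  have hl2 : l < -2 := by linarith
  have hl0 : l < 0 := by linarith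
  have hlne : l ≠ 0 := ne_of_lt hl0
  have hθ : 0 < theta t := my_theta_pos ht hl0
  have hθ2 : theta t ^ 2 = t / (-l) := my_theta_sq ht hl0
  have ht2 : t = theta t ^ 2 * (-l) := by rw [hθ2]; field_simp
  set σ : ℝ := r / theta t with hσdef
  have hσ0 : 0 < σ := div_pos hr hθ
  have hσσ₀ : σ < σ₀ := by
    rw [hσdef, div_lt_iff₀ hθ]; linarith
  have hrσθ : r = σ * theta t := by rw [hσdef]; field_simp
  set τ : ℝ := thetaThetaPrime t with hτdef
  set τd : ℝ := (1/2) * (1/(t*l^2) - 2/(t*l^3)) with hτddef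
  -- basic bounds on τ, τd
  have hτL : 2*(τ*(-l)) = 1 + 1/(-l) := by
    rw [hτdef]
    simp only [thetaThetaPrime, one_div, inv_neg, ← hldef]
    field_simp
    ring
  have hml : (0:ℝ) < -l := by linarith
  have hinvl : 0 < 1/(-l) := by positivity
  have hinvl1 : 1/(-l) ≤ 1 := by
    rw [div_le_one hml]; linarith
  have hτL1 : 1 ≤ 2*(τ*(-l)) := by rw [hτL]; linarith
  have hτL2 : τ*(-l) ≤ 1 := by nlinarith
  have hτpos : 0 < τ := by nlinarith
  have hl2pos : 0 < l^2 := by positivity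
  have hl3neg : l^3 < 0 := by nlinarith
  have hτdpos : 0 < τd := by
    have h1 : (0:ℝ) < 1/(t*l^2) := by positivity
    have h2 : 2/(t*l^3) < 0 := div_neg_of_pos_of_neg two_pos (mul_neg_of_pos_of_neg ht hl3neg)
    rw [hτddef]; linarith
  have hupos : 0 < t * τd := mul_pos ht hτdpos
  have huL : (t*τd)*(-l)^2 ≤ 1 := by
    have he : (t*τd)*(-l)^2 = (1/2)*(1 + 2/(-l)) := by
      rw [hτddef]; field_simp; ring
    rw [he]
    have : 2/(-l) ≤ 1 := by rw [div_le_one hml]; linarith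
    linarith
  have hC28 : 28*C ≤ (-l)*(ε*η) := by
    have h1 : 28*C/(ε*η) ≤ L₀ := by rw [hL₀def]; linarith
    have h2 : L₀ < -l := by linarith
    have h3 : 28*C/(ε*η) < -l := lt_of_le_of_lt h1 h2
    calc 28*C = (28*C/(ε*η))*(ε*η) := by field_simp
    _ ≤ (-l)*(ε*η) := by
        apply mul_le_mul_of_nonneg_right h3.le (by positivity)
  -- values at σ
  have hii' := hii σ ⟨hσ0, hσσ₀⟩
  have hiv' := hiv σ ⟨hσ0, hσσ₀⟩
  have hB1 : |V₁ σ| ≤ C*σ^2 := by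
    have := abs_nonneg (σ * deriv V₁ σ); have := abs_nonneg (Qop n V₁ σ); linarith
  have hB2 : |σ * deriv V₁ σ| ≤ C*σ^2 := by
    have := abs_nonneg (V₁ σ); have := abs_nonneg (Qop n V₁ σ); linarith
  have hQb : -(C*σ^2) ≤ Qop n V₁ σ := by
    have h := abs_le.1 (show |Qop n V₁ σ| ≤ C*σ^2 by
      have := abs_nonneg (V₁ σ); have := abs_nonneg (σ * deriv V₁ σ); linarith)
    exact h.1
  -- time derivative
  have hlt2 : (-l)/t = 1/(theta t)^2 := by
    rw [hθ2, one_div_div]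
  have hσt : HasDerivAt (fun s => r / theta s) (-(σ*τ*((-l)/t))) t := by
    have h := (hasDerivAt_const t r).div (my_hasDerivAt_theta ht hl0) hθ.ne'
    refine h.congr_deriv (Eq.symm ?_)
    rw [hlt2, hrσθ, ← hτdef]
    field_simp
    ring
  set dσ : ℝ := -(σ*τ*((-l)/t)) with hdσdef
  have hD₀ := my_derivs_aux V₀ hV₀ hσ0
  have hD₁ := my_derivs_aux V₁ hV₁ hσ0
  have h0 : HasDerivAt (fun s => V₀ (r / theta s)) (deriv V₀ σ * dσ) t :=
    (hD₀.1).comp t hσt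
  have h1 : HasDerivAt (fun s => (1 + ε) * thetaThetaPrime s) ((1+ε)*τd) t := by
    have := (my_hasDerivAt_ttp ht hl0).const_mul ((1:ℝ)+ε)
    rwa [← hldef, ← hτddef] at this
  have h2 : HasDerivAt (fun s => V₁ (r / theta s)) (deriv V₁ σ * dσ) t :=
    (hD₁.1).comp t hσt
  have htot : HasDerivAt
      (fun s => V₀ (r / theta s) + (1 + ε) * thetaThetaPrime s * V₁ (r / theta s))
      (deriv V₀ σ * dσ + ((1+ε)*τd * V₁ σ + ((1+ε)*τ) * (deriv V₁ σ * dσ))) t :=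
    h0.add (h1.mul h2)
  rw [htot.deriv]
  -- spatial side
  set c : ℝ := (1+ε)*τ with hcdef
  set vfun : ℝ → ℝ :=
    fun ρ => V₀ (ρ / theta t) + (1 + ε) * thetaThetaPrime t * V₁ (ρ / theta t) with hvdef
  have hxd : ∀ ρ : ℝ, HasDerivAt (fun x => x / theta t) (theta t)⁻¹ ρ := by
    intro ρ
    simpa [one_div] using (hasDerivAt_id ρ).div_const (theta t)
  have hscale : ∀ ρ, 0 < ρ → HasDerivAt vfun
      (deriv V₀ (ρ/theta t) * (theta t)⁻¹ + c * (deriv V₁ (ρ/theta t) * (theta t)⁻¹)) ρ := by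
    intro ρ hρ
    have hρθ : 0 < ρ / theta t := div_pos hρ hθ
    have ha := ((my_derivs_aux V₀ hV₀ hρθ).1).comp ρ (hxd ρ)
    have hb := (((my_derivs_aux V₁ hV₁ hρθ).1).comp ρ (hxd ρ)).const_mul c
    exact ha.add hb
  have hd1 : deriv vfun r = deriv V₀ σ * (theta t)⁻¹ + c * (deriv V₁ σ * (theta t)⁻¹) := by
    have := (hscale r hr).deriv
    rwa [← hσdef] at this
  have hgEq : deriv vfun =ᶠ[𝓝 r]
      (fun ρ => deriv V₀ (ρ/theta t) * (theta t)⁻¹ + c * (deriv V₁ (ρ/theta t) * (theta t)⁻¹)) :=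
    Filter.eventuallyEq_of_mem (isOpen_Ioi.mem_nhds hr) (fun ρ hρ => (hscale ρ hρ).deriv)
  have hg : HasDerivAt
      (fun ρ => deriv V₀ (ρ/theta t) * (theta t)⁻¹ + c * (deriv V₁ (ρ/theta t) * (theta t)⁻¹))
      ((deriv (deriv V₀) σ * (theta t)⁻¹) * (theta t)⁻¹
        + c * ((deriv (deriv V₁) σ * (theta t)⁻¹) * (theta t)⁻¹)) r := by
    have ha := (((hD₀.2).comp r (hxd r)).mul_const (theta t)⁻¹)
    have hb := ((((hD₁.2).comp r (hxd r)).mul_const (theta t)⁻¹)).const_mul c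
    exact ha.add hb
  have hd2 : deriv (deriv vfun) r =
      (deriv (deriv V₀) σ * (theta t)⁻¹) * (theta t)⁻¹
        + c * ((deriv (deriv V₁) σ * (theta t)⁻¹) * (theta t)⁻¹) := by
    rw [hgEq.deriv_eq]; exact hg.deriv
  have hvr : vfun r = V₀ σ + c * V₁ σ := by rw [hvdef]
  -- hypothesis identities at σ
  have hiA := hi σ hσ0
  have hiiiA := hiii σ hσ0
  rw [Fop] at hiA
  rw [dFop] at hiiiA
  -- decomposition of Fop
  have hFop : Fop n vfun r =
      ((-l)/t) * (c * (-(σ * deriv V₀ σ)) + c^2 * Qop n V₁ σ) := by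
    rw [Fop, hvr, hd1, hd2, hrσθ, hlt2, Qop]
    have hθne : theta t ≠ 0 := hθ.ne'
    linear_combination (1/(theta t)^2) * hiA + (c/(theta t)^2) * hiiiA
  rw [hFop]
  -- final inequality
  have hkey := my_keyineq ε η C σ τ (-l) (t*τd) (-(σ * deriv V₀ σ)) (V₁ σ)
    (σ * deriv V₁ σ) (Qop n V₁ σ) hε0 hε1 hη hC hσ0 hτpos (by linarith) hupos
    hii' hB1 hB2 hQb hτL1 hτL2 huL hC28
  have hstep : t * (deriv V₀ σ * dσ + ((1+ε)*τd * V₁ σ + ((1+ε)*τ) * (deriv V₁ σ * dσ)))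
      ≤ t * (((-l)/t) * (c * (-(σ * deriv V₀ σ)) + c^2 * Qop n V₁ σ)) := by
    have e1 : t * (deriv V₀ σ * dσ + ((1+ε)*τd * V₁ σ + ((1+ε)*τ) * (deriv V₁ σ * dσ)))
        = -((-l)*τ*(σ*deriv V₀ σ)) + ((1+ε)*(t*τd)*(V₁ σ)
            - (1+ε)*τ*((-l)*τ*(σ*deriv V₁ σ))) := by
      rw [hdσdef]; field_simp [ht.ne']; ring
    have e2 : t * (((-l)/t) * (c * (-(σ * deriv V₀ σ)) + c^2 * Qop n V₁ σ))
        = (-l) * (c * (-(σ * deriv V₀ σ)) + c^2 * Qop n V₁ σ) := by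
      field_simp [ht.ne']
    rw [e1, e2, ← sub_nonneg]
    have e3 : (-l) * (c * (-(σ * deriv V₀ σ)) + c^2 * Qop n V₁ σ)
        - (-((-l)*τ*(σ*deriv V₀ σ)) + ((1+ε)*(t*τd)*(V₁ σ)
            - (1+ε)*τ*((-l)*τ*(σ*deriv V₁ σ))))
        = (-l)*(ε*τ)*(-(σ * deriv V₀ σ)) + (-l)*(1+ε)^2*τ^2*(Qop n V₁ σ)
            + (-l)*(1+ε)*τ^2*(σ * deriv V₁ σ) - (1+ε)*(t*τd)*(V₁ σ) := by
      rw [hcdef]; ring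
    rw [e3]
    exact hkey
  exact le_of_mul_le_mul_left hstep ht
end
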